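/- arXiv:1306.0832 — 11 statements merged into one kernel-verified Lean document; each statement's English description precedes it below -/
import Mathlib

section
/- The steady-state equation 0 = [A_I D + A_II (1-D)] z̄ + b_I D + b_II (1-D) for the averaged model of the semi-quasi-Z-source inverter with constant duty cycle D ∈ (0,1) has the unique solution z̄ = (ī_{L1}, ī_{L2}, v̄_{C1}, v̄_{C2}) with v̄_{C1} = V_in·D/(1-D), v̄_{C2} = V_in·(1-2D)/(1-D), ī_{L2} = -v̄_{C2}/R, and ī_{L1} = ī_{L2}·D/(1-D). -/
/-!
The averaged steady-state equation is the system
`(D • A_Iᵠ + (1 - D) • A_IIᵠ) z + D • b_Iᵠ + (1 - D) • b_IIᵠ = 0` multiplied on the left by the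
invertible matrix `P⁻¹ / 2`, so both have the same solutions. The latter is triangular: its
first row gives `v_C1`, the second then `v_C2`, the fourth `i_L2` and the third `i_L1`, each
after dividing by `1 - D ≠ 0`.
-/

open Matrix

theorem smul_mul_affineCombination_eq_zero_iff {K n : Type*} [Field K] [Fintype n]
    [DecidableEq n] {M : Matrix n n K} (hM : IsUnit M) {c : K} (hc : c ≠ 0) (s t : K)
    (A B : Matrix n n K) (a b z : n → K) :
    (s • (c • (M * A)) + t • (c • (M * B))) *ᵥ z + s • (c • (M *ᵥ a)) + t • (c • (M *ᵥ b)) = 0 ↔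
      (s • A + t • B) *ᵥ z + s • a + t • b = 0 := by
  have factor :
      (s • (c • (M * A)) + t • (c • (M * B))) *ᵥ z + s • (c • (M *ᵥ a)) + t • (c • (M *ᵥ b)) =
        c • (M *ᵥ ((s • A + t • B) *ᵥ z + s • a + t • b)) := by
    simp only [mulVec_add, mulVec_smul, add_mulVec, smul_mulVec, mulVec_mulVec, smul_add,
      smul_comm s c, smul_comm t c]
  rw [factor, smul_eq_zero, or_iff_right hc,
    (mulVec_injective_iff_isUnit.2 hM).eq_iff' (mulVec_zero M)]

theorem isUnit_smul_diagonal {K n : Type*} [Field K] [Fintype n] [DecidableEq n] {c : K}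
    (hc : c ≠ 0) {v : n → K} (hv : ∀ i, v i ≠ 0) : IsUnit (c • diagonal v) := by
  rw [← diagonal_smul, isUnit_diagonal, Pi.isUnit_iff]
  exact fun i => (mul_ne_zero hc (hv i)).isUnit

theorem averaged_equation_q_eq_zero_iff (R Vin D : ℝ) (z : Fin 4 → ℝ) :
    (D • !![0,0,0,0; 0,0,1,1; 0,-1,0,0; 0,-1,0,-1/R] +
        (1 - D) • !![0,0,-1,0; 0,0,0,1; 1,0,0,0; 0,-1,0,-1/R]) *ᵥ z +
        D • ![Vin, 0, 0, 0] + (1 - D) • ![0, -Vin, 0, 0] = 0 ↔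
      D * Vin - (1 - D) * z 2 = 0 ∧ D * z 2 + z 3 - (1 - D) * Vin = 0 ∧
        (1 - D) * z 0 - D * z 1 = 0 ∧ -z 1 - z 3 / R = 0 := by
  have rows :
      (D • !![0,0,0,0; 0,0,1,1; 0,-1,0,0; 0,-1,0,-1/R] +
          (1 - D) • !![0,0,-1,0; 0,0,0,1; 1,0,0,0; 0,-1,0,-1/R]) *ᵥ z +
          D • ![Vin, 0, 0, 0] + (1 - D) • ![0, -Vin, 0, 0] =
        ![D * Vin - (1 - D) * z 2, D * z 2 + z 3 - (1 - D) * Vin, (1 - D) * z 0 - D * z 1,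
          -z 1 - z 3 / R] := by
    ext i
    fin_cases i <;> simp [dotProduct, Fin.sum_univ_four] <;> ring
  rw [rows]
  simp only [cons_eq_zero_iff, zero_empty, and_true]

noncomputable def steadyState (R Vin D : ℝ) : Fin 4 → ℝ :=
  ![(-(Vin * (1 - 2*D) / (1 - D)) / R) * (D / (1 - D)),
    -(Vin * (1 - 2*D) / (1 - D)) / R,
    Vin * D / (1 - D),
    Vin * (1 - 2*D) / (1 - D)]

theorem eq_steadyState_iff {R Vin D : ℝ} (hD : D ≠ 1) (z : Fin 4 → ℝ) :
    z = steadyState R Vin D ↔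
      D * Vin - (1 - D) * z 2 = 0 ∧ D * z 2 + z 3 - (1 - D) * Vin = 0 ∧
        (1 - D) * z 0 - D * z 1 = 0 ∧ -z 1 - z 3 / R = 0 := by
  have h1D : 1 - D ≠ 0 := sub_ne_zero.2 hD.symm
  constructor
  · rintro rfl
    simp only [steadyState, cons_val]
    refine ⟨?_, ?_, ?_, ?_⟩ <;> field_simp <;> ring
  · rintro ⟨row0, row1, row2, row3⟩
    have hvC1 : z 2 = Vin * D / (1 - D) := by
      rw [eq_div_iff h1D]
      linarith
    have hvC2 : z 3 = Vin * (1 - 2*D) / (1 - D) := by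
      rw [eq_div_iff h1D]
      linear_combination (1 - D) * row1 + D * row0
    have hiL2 : z 1 = -z 3 / R := by
      rw [neg_div]
      linarith
    have hiL1 : z 0 = z 1 * (D / (1 - D)) := by
      rw [mul_div_assoc', eq_div_iff h1D]
      linarith
    ext i
    fin_cases i <;> simp [steadyState, hvC1, hvC2, hiL1, hiL2]

theorem steady_state_unique_general
    (L1 L2 C1 C2 R Vin : ℝ) (hL1 : 0 < L1) (hL2 : 0 < L2) (hC1 : 0 < C1)
    (hC2 : 0 < C2)
    (D : ℝ) (hD : D ∈ Set.Ioo (0:ℝ) 1)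
    (P : Matrix (Fin 4) (Fin 4) ℝ) (hP : P = (1/2 : ℝ) • Matrix.diagonal ![L1, L2, C1, C2])
    (AIq AIIq : Matrix (Fin 4) (Fin 4) ℝ)
    (hAIq : AIq = !![0,0,0,0; 0,0,1,1; 0,-1,0,0; 0,-1,0,-1/R])
    (hAIIq : AIIq = !![0,0,-1,0; 0,0,0,1; 1,0,0,0; 0,-1,0,-1/R])
    (bIq bIIq : Fin 4 → ℝ)
    (hbIq : bIq = ![Vin, 0, 0, 0]) (hbIIq : bIIq = ![0, -Vin, 0, 0])
    (AI AII : Matrix (Fin 4) (Fin 4) ℝ) (bI bII : Fin 4 → ℝ)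
    (hAI : AI = (1/2 : ℝ) • (P⁻¹ * AIq)) (hAII : AII = (1/2 : ℝ) • (P⁻¹ * AIIq))
    (hbI : bI = (1/2 : ℝ) • (P⁻¹ *ᵥ bIq)) (hbII : bII = (1/2 : ℝ) • (P⁻¹ *ᵥ bIIq)) :
    ∀ z : Fin 4 → ℝ,
      ((D • AI + (1 - D) • AII) *ᵥ z + D • bI + (1 - D) • bII = 0) ↔
      z = ![ (-(Vin * (1 - 2*D) / (1 - D)) / R) * (D / (1 - D)),
             -(Vin * (1 - 2*D) / (1 - D)) / R,
             Vin * D / (1 - D),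
             Vin * (1 - 2*D) / (1 - D) ] := by
  intro z
  have hPinv : IsUnit P⁻¹ := by
    rw [isUnit_nonsing_inv_iff, hP]
    refine isUnit_smul_diagonal (by norm_num) fun i => ?_
    fin_cases i <;> simp [hL1.ne', hL2.ne', hC1.ne', hC2.ne']
  subst hAI hAII hbI hbII hAIq hAIIq hbIq hbIIq
  rw [smul_mul_affineCombination_eq_zero_iff hPinv (by norm_num), averaged_equation_q_eq_zero_iff]
  exact (eq_steadyState_iff hD.2.ne z).symm

/-- unique steady state of the averaged model. -/
theorem steady_state_unique
    (L1 L2 C1 C2 R Vin : ℝ) (hL1 : 0 < L1) (hL2 : 0 < L2) (hC1 : 0 < C1)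
    (hC2 : 0 < C2) (hR : 0 < R) (hVin : 0 < Vin)
    (D : ℝ) (hD : D ∈ Set.Ioo (0:ℝ) 1)
    (P : Matrix (Fin 4) (Fin 4) ℝ) (hP : P = (1/2 : ℝ) • Matrix.diagonal ![L1, L2, C1, C2])
    (AIq AIIq : Matrix (Fin 4) (Fin 4) ℝ)
    (hAIq : AIq = !![0,0,0,0; 0,0,1,1; 0,-1,0,0; 0,-1,0,-1/R])
    (hAIIq : AIIq = !![0,0,-1,0; 0,0,0,1; 1,0,0,0; 0,-1,0,-1/R])
    (bIq bIIq : Fin 4 → ℝ)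
    (hbIq : bIq = ![Vin, 0, 0, 0]) (hbIIq : bIIq = ![0, -Vin, 0, 0])
    (AI AII : Matrix (Fin 4) (Fin 4) ℝ) (bI bII : Fin 4 → ℝ)
    (hAI : AI = (1/2 : ℝ) • (P⁻¹ * AIq)) (hAII : AII = (1/2 : ℝ) • (P⁻¹ * AIIq))
    (hbI : bI = (1/2 : ℝ) • (P⁻¹ *ᵥ bIq)) (hbII : bII = (1/2 : ℝ) • (P⁻¹ *ᵥ bIIq)) :
    ∀ z : Fin 4 → ℝ,
      ((D • AI + (1 - D) • AII) *ᵥ z + D • bI + (1 - D) • bII = 0) ↔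
      z = ![ (-(Vin * (1 - 2*D) / (1 - D)) / R) * (D / (1 - D)),
             -(Vin * (1 - 2*D) / (1 - D)) / R,
             Vin * D / (1 - D),
             Vin * (1 - 2*D) / (1 - D) ] :=
  steady_state_unique_general L1 L2 C1 C2 R Vin hL1 hL2 hC1 hC2 D hD P hP AIq AIIq hAIq hAIIq bIq
    bIIq hbIq hbIIq AI AII bI bII hAI hAII hbI hbII
end

section
/- For every μ ∈ [-0.5, 0.5], the matrix A(μ) = P⁻¹(A_0^q + E_0^q μ)/2 satisfies A(μ)ᵀ P + P A(μ) = -Q where Q = diag(0,0,0,1/R) ≥ 0. In particular the circuit energy V(x) = xᵀ P x is nonincreasing along trajectories of ẋ = A(μ(t)) x for any measurable μ(t) ∈ [-0.5, 0.5]. -/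
/-!
Since `P` is symmetric and invertible, `A(μ)ᵀ P + P A(μ)` is the symmetric part of
`A₀ + μ E₀`; `E₀` is skew-symmetric, so `μ` drops out and only the resistive entry `-1/R`
of `A₀` survives. Along a trajectory, `d/dt (xᵀ P x) = xᵀ (Aᵀ P + P A) x = -xᵀ Q x ≤ 0`.
-/

open Matrix

section Calculus

variable {n : Type*} [Fintype n] {t : ℝ}

theorem HasDerivAt.dotProduct {u v : ℝ → n → ℝ} {u' v' : n → ℝ}
    (hu : HasDerivAt u u' t) (hv : HasDerivAt v v' t) :
    HasDerivAt (fun s => u s ⬝ᵥ v s) (u' ⬝ᵥ v t + u t ⬝ᵥ v') t := by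
  simp only [_root_.dotProduct, ← Finset.sum_add_distrib]
  exact HasDerivAt.fun_sum fun i _ => (hasDerivAt_pi.1 hu i).mul (hasDerivAt_pi.1 hv i)

theorem HasDerivAt.mulVec {x : ℝ → n → ℝ} {x' : n → ℝ} (hx : HasDerivAt x x' t)
    (P : Matrix n n ℝ) : HasDerivAt (fun s => P *ᵥ x s) (P *ᵥ x') t := by
  refine hasDerivAt_pi.2 fun i => ?_
  have h := (hasDerivAt_const t (P i)).dotProduct hx
  rw [zero_dotProduct, zero_add] at h
  exact h

end Calculus

theorem dotProduct_mulVec_add_eq_transpose_mul_add {n R : Type*} [Fintype n] [CommRing R]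
    (B P : Matrix n n R) (y : n → R) :
    (B *ᵥ y) ⬝ᵥ (P *ᵥ y) + y ⬝ᵥ (P *ᵥ (B *ᵥ y)) = y ⬝ᵥ ((Bᵀ * P + P * B) *ᵥ y) := by
  rw [add_mulVec, dotProduct_add, ← mulVec_mulVec, ← mulVec_mulVec, dotProduct_comm (B *ᵥ y),
    dotProduct_mulVec, ← mulVec_transpose, dotProduct_comm (Bᵀ *ᵥ _)]

theorem antitone_dotProduct_mulVec_of_lyapunov {n : Type*} [Fintype n]
    {P Q : Matrix n n ℝ} (hQ : Q.PosSemidef) {B : ℝ → Matrix n n ℝ}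
    (hB : ∀ t, (B t)ᵀ * P + P * B t = -Q) {x : ℝ → n → ℝ}
    (hx : ∀ t, HasDerivAt x (B t *ᵥ x t) t) :
    Antitone fun t => x t ⬝ᵥ (P *ᵥ x t) := by
  have hV : ∀ t, HasDerivAt (fun s => x s ⬝ᵥ (P *ᵥ x s)) (-(x t ⬝ᵥ (Q *ᵥ x t))) t := by
    intro t
    convert (hx t).dotProduct ((hx t).mulVec P) using 1
    rw [dotProduct_mulVec_add_eq_transpose_mul_add, hB, neg_mulVec, dotProduct_neg]
  refine antitone_of_hasDerivAt_nonpos hV fun t => ?_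
  simpa using hQ.dotProduct_mulVec_nonneg (x t)

theorem transpose_smul_inv_mul_mul_add {n R : Type*} [Fintype n] [DecidableEq n] [CommRing R]
    {P : Matrix n n R} (hPsymm : P.IsSymm) (hP : IsUnit P.det) (c : R) (M : Matrix n n R) :
    (c • (P⁻¹ * M))ᵀ * P + P * (c • (P⁻¹ * M)) = c • (Mᵀ + M) := by
  rw [transpose_smul, transpose_mul, transpose_nonsing_inv, hPsymm.eq, Matrix.smul_mul,
    Matrix.mul_smul, Matrix.mul_assoc, nonsing_inv_mul P hP, ← Matrix.mul_assoc,
    mul_nonsing_inv P hP, Matrix.mul_one, Matrix.one_mul, smul_add]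

theorem transpose_add_self_add_smul_of_transpose_eq_neg {n R : Type*} [CommRing R]
    {E : Matrix n n R} (hE : Eᵀ = -E) (M : Matrix n n R) (μ : R) :
    (M + μ • E)ᵀ + (M + μ • E) = Mᵀ + M := by
  rw [transpose_add, transpose_smul, hE, smul_neg]
  abel

theorem circuit_coupling_transpose :
    (!![0,0,1,0; 0,0,1,0; -1,-1,0,0; 0,0,0,0] : Matrix (Fin 4) (Fin 4) ℝ)ᵀ =
      -!![0,0,1,0; 0,0,1,0; -1,-1,0,0; 0,0,0,0] := by
  ext i j
  fin_cases i <;> fin_cases j <;> norm_num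

theorem circuit_symmetric_part (R : ℝ) :
    (1/2 : ℝ) • ((!![0,0,-1/2,0; 0,0,1/2,1; 1/2,-1/2,0,0; 0,-1,0,-1/R] :
        Matrix (Fin 4) (Fin 4) ℝ)ᵀ + !![0,0,-1/2,0; 0,0,1/2,1; 1/2,-1/2,0,0; 0,-1,0,-1/R]) =
      -diagonal ![0, 0, 0, 1/R] := by
  ext i j
  fin_cases i <;> fin_cases j <;> norm_num
  ring

/-- Lyapunov equation A(μ)ᵀP + PA(μ) = -Q with Q = diag(0,0,0,1/R) ⪰ 0,
and the circuit energy V(x) = xᵀPx is nonincreasing along trajectories. -/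
theorem lyapunov_equation_energy_nonincreasing
    (L1 L2 C1 C2 R : ℝ) (hL1 : 0 < L1) (hL2 : 0 < L2) (hC1 : 0 < C1)
    (hC2 : 0 < C2) (hR : 0 < R)
    (P : Matrix (Fin 4) (Fin 4) ℝ) (hP : P = (1/2 : ℝ) • Matrix.diagonal ![L1, L2, C1, C2])
    (A0q E0q : Matrix (Fin 4) (Fin 4) ℝ)
    (hA0q : A0q = !![0,0,-1/2,0; 0,0,1/2,1; 1/2,-1/2,0,0; 0,-1,0,-1/R])
    (hE0q : E0q = !![0,0,1,0; 0,0,1,0; -1,-1,0,0; 0,0,0,0])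
    (A : ℝ → Matrix (Fin 4) (Fin 4) ℝ)
    (hA : ∀ μ, A μ = (1/2 : ℝ) • (P⁻¹ * (A0q + μ • E0q)))
    (Q : Matrix (Fin 4) (Fin 4) ℝ) (hQ : Q = Matrix.diagonal ![0, 0, 0, 1/R]) :
    (∀ μ ∈ Set.Icc (-(0.5:ℝ)) 0.5, (A μ)ᵀ * P + P * A μ = -Q) ∧
    Q.PosSemidef ∧
    (∀ μ : ℝ → ℝ, Measurable μ → (∀ t, μ t ∈ Set.Icc (-(0.5:ℝ)) 0.5) →
      ∀ x : ℝ → Fin 4 → ℝ,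
        (∀ t, HasDerivAt x (A (μ t) *ᵥ x t) t) →
        Antitone (fun t => x t ⬝ᵥ (P *ᵥ x t))) := by
  have hPsymm : P.IsSymm := hP ▸ (isSymm_diagonal _).smul _
  have hPdet : IsUnit P.det := by
    rw [hP, det_smul, det_diagonal, Fin.prod_univ_four]
    simp only [Fintype.card_fin, Matrix.cons_val]
    exact isUnit_iff_ne_zero.2 (by positivity)
  have hlyap : ∀ μ, (A μ)ᵀ * P + P * A μ = -Q := fun μ => by
    rw [hA, transpose_smul_inv_mul_mul_add hPsymm hPdet,
      transpose_add_self_add_smul_of_transpose_eq_neg (hE0q ▸ circuit_coupling_transpose),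
      hA0q, circuit_symmetric_part, hQ]
  have hQpsd : Q.PosSemidef := by
    rw [hQ]
    refine PosSemidef.diagonal fun i => ?_
    fin_cases i <;> simp [hR.le]
  exact ⟨fun μ _ => hlyap μ, hQpsd, fun μ _ _ x hx =>
    antitone_dotProduct_mulVec_of_lyapunov hQpsd (fun t => hlyap (μ t)) hx⟩
end

section
/- For every μ ∈ (-0.5, 0.5), the matrix A(μ) is Hurwitz, i.e., every eigenvalue of A(μ) has strictly negative real part. -/
/-!
Multiplying `A(μ) v = z v` by `P` turns it into `K v = z P v` with `K = (A₀ + μ E₀) / 2`, whose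
Hermitian part is `-diag(0, 0, 0, 1/R)`: only the resistor dissipates. Pairing with `v` gives
`Re z · v⋆Pv = -|v 3|² / R`, so `Re z ≥ 0` forces `v 3 = 0`. The remaining equations then
propagate along the circuit: row 3 gives `v 1 = 0`, row 1 gives `v 2 = 0` (as `μ ≠ -1/2`) and
row 2 gives `v 0 = 0` (as `μ ≠ 1/2`), so `v` cannot be an eigenvector.
-/

open Matrix ComplexOrder

section

variable {n : Type*} [Fintype n]

theorem Matrix.exists_mulVec_eq_smul_of_mem_spectrum {K : Type*} [Field K] [DecidableEq n]
    {A : Matrix n n K} {z : K} (hz : z ∈ spectrum K A) : ∃ v ≠ 0, A *ᵥ v = z • v := by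
  rw [← Matrix.spectrum_toLin', ← Module.End.hasEigenvalue_iff_mem_spectrum] at hz
  obtain ⟨v, hv⟩ := hz.exists_hasEigenvector
  exact ⟨v, hv.2, by simpa using hv.apply_eq_smul⟩

theorem Matrix.star_dotProduct_conjTranspose_mulVec (K : Matrix n n ℂ) (v : n → ℂ) :
    star v ⬝ᵥ Kᴴ *ᵥ v = star (star v ⬝ᵥ K *ᵥ v) := by
  rw [star_dotProduct, star_mulVec, conjTranspose_conjTranspose, dotProduct_mulVec]

theorem Matrix.star_dotProduct_add_conjTranspose_mulVec (K : Matrix n n ℂ) (v : n → ℂ) :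
    star v ⬝ᵥ (K + Kᴴ) *ᵥ v = (2 * (star v ⬝ᵥ K *ᵥ v).re : ℝ) := by
  rw [add_mulVec, dotProduct_add, star_dotProduct_conjTranspose_mulVec]
  exact Complex.add_conj _

theorem Matrix.mulVec_add_conjTranspose_eq_zero_of_re_nonneg {K P : Matrix n n ℂ} {v : n → ℂ}
    {z : ℂ} (hK : (-(K + Kᴴ)).PosSemidef) (hP : P.PosSemidef) (h : K *ᵥ v = z • P *ᵥ v)
    (hz : 0 ≤ z.re) : (K + Kᴴ) *ᵥ v = 0 := by
  obtain ⟨hPre, hPim⟩ := Complex.nonneg_iff.mp (hP.dotProduct_mulVec_nonneg v)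
  have hKv : (star v ⬝ᵥ K *ᵥ v).re = z.re * (star v ⬝ᵥ P *ᵥ v).re := by
    rw [h, dotProduct_smul, smul_eq_mul, Complex.mul_re, ← hPim]; ring
  have hle := Complex.nonneg_iff.mp (hK.dotProduct_mulVec_nonneg v) |>.1
  rw [neg_mulVec, dotProduct_neg, star_dotProduct_add_conjTranspose_mulVec] at hle
  have h0 : (star v ⬝ᵥ K *ᵥ v).re = 0 := by
    simp only [Complex.neg_re, Complex.ofReal_re] at hle
    nlinarith [mul_nonneg hz hPre]
  rw [← neg_eq_zero, ← neg_mulVec, ← hK.dotProduct_mulVec_zero_iff, neg_mulVec, dotProduct_neg,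
    star_dotProduct_add_conjTranspose_mulVec, h0]
  simp

theorem Matrix.map_mulVec_eq_smul_map_mulVec {R S : Type*} [CommSemiring R] [CommSemiring S]
    (f : R →+* S) {P A K : Matrix n n R} (hPA : P * A = K) {v : n → S} {z : S}
    (hv : A.map f *ᵥ v = z • v) : K.map f *ᵥ v = z • P.map f *ᵥ v := by
  rw [← hPA, Matrix.map_mul, ← mulVec_mulVec, hv, mulVec_smul]

end

noncomputable section

namespace Circuit

def A₀ (R : ℝ) : Matrix (Fin 4) (Fin 4) ℝ :=
  !![0, 0, -1/2, 0; 0, 0, 1/2, 1; 1/2, -1/2, 0, 0; 0, -1, 0, -1/R]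

def E₀ : Matrix (Fin 4) (Fin 4) ℝ :=
  !![0, 0, 1, 0; 0, 0, 1, 0; -1, -1, 0, 0; 0, 0, 0, 0]

/-- `P * A μ = structureMatrix R μ`, read in `ℂ`. -/
def structureMatrix (R μ : ℝ) : Matrix (Fin 4) (Fin 4) ℂ :=
  ((1/2 : ℝ) • (A₀ R + μ • E₀)).map Complex.ofRealHom

theorem structureMatrix_add_conjTranspose (R μ : ℝ) :
    structureMatrix R μ + (structureMatrix R μ)ᴴ = diagonal ![0, 0, 0, -(R : ℂ)⁻¹] := by
  ext i j
  fin_cases i <;> fin_cases j <;> simp [structureMatrix, A₀, E₀] <;> ring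

theorem posSemidef_neg_structureMatrix_add_conjTranspose {R : ℝ} (hR : 0 ≤ R) (μ : ℝ) :
    (-(structureMatrix R μ + (structureMatrix R μ)ᴴ)).PosSemidef := by
  rw [structureMatrix_add_conjTranspose, diagonal_neg, posSemidef_diagonal_iff]
  intro i
  fin_cases i <;> simp [hR]

theorem apply_three_eq_zero {R : ℝ} (hR : R ≠ 0) (μ : ℝ) {v : Fin 4 → ℂ}
    (hv : (structureMatrix R μ + (structureMatrix R μ)ᴴ) *ᵥ v = 0) : v 3 = 0 := by
  simpa [structureMatrix_add_conjTranspose, mulVec_diagonal, hR] using congrFun hv 3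

theorem eq_zero_of_mulVec_eq_smul_diagonal_mulVec {R μ : ℝ} (hμ₁ : μ ≠ 1/2) (hμ₂ : μ ≠ -1/2)
    {w : ℂ} {q v : Fin 4 → ℂ} (h : structureMatrix R μ *ᵥ v = w • diagonal q *ᵥ v)
    (hv₃ : v 3 = 0) : v = 0 := by
  have hc₁ : (2⁻¹ - μ : ℂ) ≠ 0 := by
    simpa using Complex.ofReal_ne_zero.mpr (show (2⁻¹ - μ : ℝ) ≠ 0 by contrapose! hμ₁; linarith)
  have hc₂ : (2⁻¹ + μ : ℂ) ≠ 0 := by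
    simpa using Complex.ofReal_ne_zero.mpr (show (2⁻¹ + μ : ℝ) ≠ 0 by contrapose! hμ₂; linarith)
  have hv₁ : v 1 = 0 := by
    simpa [structureMatrix, A₀, E₀, mulVec, dotProduct, Fin.sum_univ_four, hv₃]
      using congrFun h 3
  have hv₂ : v 2 = 0 := by
    simpa [structureMatrix, A₀, E₀, mulVec, dotProduct, Fin.sum_univ_four, hv₃, hv₁, hc₂]
      using congrFun h 1
  have hv₀ : v 0 = 0 := by
    simpa [structureMatrix, A₀, E₀, mulVec, dotProduct, Fin.sum_univ_four, hv₁, hv₂,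
      ← sub_eq_add_neg, hc₁] using congrFun h 2
  ext i
  fin_cases i <;> assumption

end Circuit

end

/-- for every μ ∈ (-0.5, 0.5), A(μ) is Hurwitz. -/
theorem A_mu_Hurwitz
    (L1 L2 C1 C2 R : ℝ) (hL1 : 0 < L1) (hL2 : 0 < L2) (hC1 : 0 < C1)
    (hC2 : 0 < C2) (hR : 0 < R)
    (P : Matrix (Fin 4) (Fin 4) ℝ) (hP : P = (1/2 : ℝ) • Matrix.diagonal ![L1, L2, C1, C2])
    (A0q E0q : Matrix (Fin 4) (Fin 4) ℝ)
    (hA0q : A0q = !![0,0,-1/2,0; 0,0,1/2,1; 1/2,-1/2,0,0; 0,-1,0,-1/R])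
    (hE0q : E0q = !![0,0,1,0; 0,0,1,0; -1,-1,0,0; 0,0,0,0])
    (A : ℝ → Matrix (Fin 4) (Fin 4) ℝ)
    (hA : ∀ μ, A μ = (1/2 : ℝ) • (P⁻¹ * (A0q + μ • E0q))) :
    ∀ μ ∈ Set.Ioo (-(0.5:ℝ)) 0.5,
      ∀ z ∈ spectrum ℂ ((A μ).map (Complex.ofReal)), z.re < 0 := by
  intro μ hμ z hz
  obtain rfl : A0q = Circuit.A₀ R := hA0q
  obtain rfl : E0q = Circuit.E₀ := hE0q
  set p : Fin 4 → ℝ := (1/2 : ℝ) • ![L1, L2, C1, C2]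
  have hp : ∀ i, 0 < p i := by intro i; fin_cases i <;> simp [p] <;> positivity
  rw [← diagonal_smul] at hP
  have hPA : P * A μ = (1/2 : ℝ) • (Circuit.A₀ R + μ • Circuit.E₀) := by
    rw [hA, mul_smul_comm, mul_nonsing_inv_cancel_left _ _ <| (isUnit_iff_isUnit_det _).mp <|
      hP ▸ isUnit_diagonal.mpr (Pi.isUnit_iff.mpr fun i => (hp i).ne'.isUnit)]
  obtain ⟨v, hv0, hv⟩ := exists_mulVec_eq_smul_of_mem_spectrum hz
  have hpencil : Circuit.structureMatrix R μ *ᵥ v = z • diagonal (fun i => (p i : ℂ)) *ᵥ v := by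
    have := map_mulVec_eq_smul_map_mulVec Complex.ofRealHom hPA hv
    rwa [hP, diagonal_map (map_zero _)] at this
  by_contra! hre
  have hv3 := Circuit.apply_three_eq_zero hR.ne' μ <|
    mulVec_add_conjTranspose_eq_zero_of_re_nonneg
      (Circuit.posSemidef_neg_structureMatrix_add_conjTranspose hR.le μ)
      (posSemidef_diagonal_iff.mpr fun i => Complex.zero_le_real.mpr (hp i).le) hpencil hre
  norm_num at hμ
  exact hv0 <|
    Circuit.eq_zero_of_mulVec_eq_smul_diagonal_mulVec (by linarith) (by linarith) hpencil hv3
end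

section
/- Neither of the mode matrices A_I = A(0.5) nor A_II = A(-0.5) is Hurwitz: each has an eigenvalue with zero real part. -/
/-!
Both mode matrices have the form `A(μ) = Q⁻¹ N(μ)` with `Q = diag(L1, L2, C1, C2)` and
`N(μ) = A₀ + μ E₀`, so an eigenvalue can be exhibited by a vector `v ≠ 0` with
`N(μ) v = z Q v`. For `μ = 1/2` the first column of `N(μ)` vanishes, so the first unit vector
is a kernel vector and `z = 0`. For `μ = -1/2` the first and third coordinates decouple into
the lossless `L1`–`C1` loop, which oscillates at `z = ± i / √(L1 C1)`.
-/

open Matrix Complex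

section

variable {n R S K : Type*} [Fintype n] [DecidableEq n]

theorem Matrix.mem_spectrum_of_mulVec_eq_smul [CommRing R] {A : Matrix n n R} {z : R}
    {v : n → R} (hv : v ≠ 0) (h : A *ᵥ v = z • v) : z ∈ spectrum R A := by
  rw [← Matrix.spectrum_toLin']
  exact Module.End.HasEigenvalue.mem_spectrum
    (Module.End.hasEigenvalue_of_hasEigenvector ⟨Module.End.mem_eigenspace_iff.2 h, hv⟩)

theorem Matrix.mem_spectrum_map_inv_mul_of_mulVec_eq_smul_mulVec [CommRing R] [CommRing S]
    (f : R →+* S) {Q N : Matrix n n R} (hQ : IsUnit Q.det) {z : S} {v : n → S} (hv : v ≠ 0)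
    (h : N.map f *ᵥ v = z • (Q.map f *ᵥ v)) : z ∈ spectrum S ((Q⁻¹ * N).map f) := by
  refine mem_spectrum_of_mulVec_eq_smul hv ?_
  rw [Matrix.map_mul, ← mulVec_mulVec, h, mulVec_smul, mulVec_mulVec, ← Matrix.map_mul,
    nonsing_inv_mul Q hQ, Matrix.map_one f f.map_zero f.map_one, one_mulVec]

theorem Matrix.smul_inv_smul_mul [Field K] {c : K} (hc : c ≠ 0) {Q : Matrix n n K}
    (hQ : IsUnit Q.det) (N : Matrix n n K) : c • ((c • Q)⁻¹ * N) = Q⁻¹ * N := by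
  have := invertibleOfNonzero hc
  rw [Matrix.inv_smul Q c hQ, invOf_eq_inv, smul_mul_assoc, smul_smul, mul_inv_cancel₀ hc,
    one_smul]

end

theorem exists_re_eq_zero_sq_mul_eq_neg_one {c : ℝ} (hc : 0 < c) :
    ∃ z : ℂ, z.re = 0 ∧ z ^ 2 * c = -1 := by
  refine ⟨I * ((√c)⁻¹ : ℝ), by simp, ?_⟩
  have hω : ((√c)⁻¹ : ℝ) ^ 2 * c = 1 := by
    rw [inv_pow, Real.sq_sqrt hc.le, inv_mul_cancel₀ hc.ne']
  rw [mul_pow, I_sq, neg_one_mul, neg_mul, ← ofReal_pow, ← ofReal_mul, hω, ofReal_one]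

theorem mode_matrices_not_Hurwitz_general
    (L1 L2 C1 C2 R : ℝ) (hL1 : 0 < L1) (hL2 : 0 < L2) (hC1 : 0 < C1)
    (hC2 : 0 < C2)
    (P : Matrix (Fin 4) (Fin 4) ℝ) (hP : P = (1/2 : ℝ) • Matrix.diagonal ![L1, L2, C1, C2])
    (A0q E0q : Matrix (Fin 4) (Fin 4) ℝ)
    (hA0q : A0q = !![0,0,-1/2,0; 0,0,1/2,1; 1/2,-1/2,0,0; 0,-1,0,-1/R])
    (hE0q : E0q = !![0,0,1,0; 0,0,1,0; -1,-1,0,0; 0,0,0,0])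
    (A : ℝ → Matrix (Fin 4) (Fin 4) ℝ)
    (hA : ∀ μ, A μ = (1/2 : ℝ) • (P⁻¹ * (A0q + μ • E0q)))
    (AI AII : Matrix (Fin 4) (Fin 4) ℝ)
    (hAI : AI = A (1/2)) (hAII : AII = A (-(1/2))) :
    (∃ z ∈ spectrum ℂ (AI.map (Complex.ofReal)), z.re = 0) ∧
    (∃ z ∈ spectrum ℂ (AII.map (Complex.ofReal)), z.re = 0) := by
  set Q := diagonal ![L1, L2, C1, C2]
  have hQ : IsUnit Q.det := by
    simp [Q, Fin.prod_univ_four, hL1.ne', hL2.ne', hC1.ne', hC2.ne']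
  have hmode (μ : ℝ) : A μ = Q⁻¹ * (A0q + μ • E0q) := by
    rw [hA, hP, smul_inv_smul_mul (by norm_num) hQ]
  constructor
  · refine ⟨0, ?_, rfl⟩
    rw [hAI, hmode]
    refine mem_spectrum_map_inv_mul_of_mulVec_eq_smul_mulVec ofRealHom hQ
      (v := Pi.single 0 1) (Pi.single_ne_zero_iff.2 one_ne_zero) ?_
    ext i; fin_cases i <;> simp [Q, hA0q, hE0q, mulVec, dotProduct, Fin.sum_univ_four]
  · obtain ⟨z, hz_re, hz⟩ := exists_re_eq_zero_sq_mul_eq_neg_one (mul_pos hL1 hC1)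
    refine ⟨z, ?_, hz_re⟩
    rw [hAII, hmode]
    refine mem_spectrum_map_inv_mul_of_mulVec_eq_smul_mulVec ofRealHom hQ
      (v := ![1, 0, -(z * L1), 0]) (fun h => one_ne_zero (congrFun h 0)) ?_
    ext i; fin_cases i <;> simp [Q, hA0q, hE0q, mulVec, dotProduct, Fin.sum_univ_four]
    · ring
    · push_cast at hz
      linear_combination hz

/-- neither A_I = A(0.5) nor A_II = A(-0.5) is Hurwitz:
each has an eigenvalue with zero real part. -/
theorem mode_matrices_not_Hurwitz
    (L1 L2 C1 C2 R : ℝ) (hL1 : 0 < L1) (hL2 : 0 < L2) (hC1 : 0 < C1)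
    (hC2 : 0 < C2) (hR : 0 < R)
    (P : Matrix (Fin 4) (Fin 4) ℝ) (hP : P = (1/2 : ℝ) • Matrix.diagonal ![L1, L2, C1, C2])
    (A0q E0q : Matrix (Fin 4) (Fin 4) ℝ)
    (hA0q : A0q = !![0,0,-1/2,0; 0,0,1/2,1; 1/2,-1/2,0,0; 0,-1,0,-1/R])
    (hE0q : E0q = !![0,0,1,0; 0,0,1,0; -1,-1,0,0; 0,0,0,0])
    (A : ℝ → Matrix (Fin 4) (Fin 4) ℝ)
    (hA : ∀ μ, A μ = (1/2 : ℝ) • (P⁻¹ * (A0q + μ • E0q)))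
    (AI AII : Matrix (Fin 4) (Fin 4) ℝ)
    (hAI : AI = A (1/2)) (hAII : AII = A (-(1/2))) :
    (∃ z ∈ spectrum ℂ (AI.map (Complex.ofReal)), z.re = 0) ∧
    (∃ z ∈ spectrum ℂ (AII.map (Complex.ofReal)), z.re = 0) :=
  mode_matrices_not_Hurwitz_general L1 L2 C1 C2 R hL1 hL2 hC1 hC2 P hP A0q E0q hA0q hE0q A hA AI AII
    hAI hAII
end

section
/- Suppose Ā is a Hurwitz n×n matrix and P is symmetric positive definite with ĀᵀP + PĀ = -Q ≤ 0. Let S_Q be a matrix whose columns form an orthonormal basis of ker Q. If there exists a symmetric matrix H with S_Qᵀ(ĀᵀH + HĀ)S_Q < 0 (negative definite), then for all sufficiently small ξ > 0 the matrix P̃ = P + ξH is positive definite and satisfies ĀᵀP̃ + P̃Ā < 0. -/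
open Matrix

/-!
Writing `P̃ = P + ξH`, the Lyapunov expression is `-(ĀᵀP̃ + P̃Ā) = Q + ξM` with
`M = -(ĀᵀH + HĀ)`. Both `P + ξH` and `Q + ξM` have the form `A + ξB` with `A ⪰ 0` and `B`
positive on `ker A`: for `P` because the kernel is trivial, for `Q` because
`ker Q = range S_Q` and `S_Qᵀ M S_Q > 0`. Such a perturbation is positive definite for small
`ξ > 0`: on the unit sphere `max (xᵀAx) (xᵀBx)` is positive, hence bounded below by some
`m > 0`, and `ξ < m / (C + 1)` works for any bound `C` of `|xᵀBx|` there.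
-/

theorem IsCompact.exists_pos_forall_add_mul_pos {X : Type*} [TopologicalSpace X] {s : Set X}
    (hs : IsCompact s) {f g : X → ℝ} (hf : ContinuousOn f s) (hg : ContinuousOn g s)
    (hf₀ : ∀ x ∈ s, 0 ≤ f x) (hg₀ : ∀ x ∈ s, f x = 0 → 0 < g x) :
    ∃ ξ₀ > 0, ∀ ξ, 0 < ξ → ξ < ξ₀ → ∀ x ∈ s, 0 < f x + ξ * g x := by
  have hmax_pos : ∀ x ∈ s, 0 < max (f x) (g x) := fun x hx =>
    (hf₀ x hx).lt_or_eq.elim lt_max_of_lt_left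
      fun h => lt_max_of_lt_right (hg₀ x hx h.symm)
  obtain ⟨m, hm, hmax⟩ := hs.exists_forall_le' (hf.sup hg) hmax_pos
  obtain ⟨C, hC⟩ := hs.exists_bound_of_continuousOn hg
  refine ⟨m / (|C| + 1), by positivity, fun ξ hξ hξ₀ x hx => ?_⟩
  have hξC : ξ * (|C| + 1) < m := (lt_div_iff₀ (by positivity)).mp hξ₀
  have hgC : -|C| ≤ g x := neg_le_of_abs_le ((hC x hx).trans (le_abs_self C))
  rcases le_max_iff.mp (hmax x hx) with hfm | hgm
  · nlinarith
  · nlinarith [hf₀ x hx]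

namespace Matrix

variable {ι : Type*} [Fintype ι]

theorem continuous_dotProduct_mulVec_self (A : Matrix ι ι ℝ) :
    Continuous fun x : ι → ℝ => x ⬝ᵥ (A *ᵥ x) :=
  continuous_id.dotProduct (continuous_const.matrix_mulVec continuous_id)

theorem mulVec_dotProduct_mulVec_mulVec {κ : Type*} [Fintype κ] (S : Matrix ι κ ℝ)
    (M : Matrix ι ι ℝ) (c : κ → ℝ) :
    (S *ᵥ c) ⬝ᵥ (M *ᵥ (S *ᵥ c)) = c ⬝ᵥ ((Sᵀ * M * S) *ᵥ c) := by
  rw [mulVec_mulVec, dotProduct_mulVec, ← vecMul_transpose, vecMul_vecMul,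
    ← dotProduct_mulVec, Matrix.mul_assoc]

theorem posDef_of_forall_norm_eq_one {A : Matrix ι ι ℝ} (hA : A.IsHermitian)
    (h : ∀ x : ι → ℝ, ‖x‖ = 1 → 0 < x ⬝ᵥ (A *ᵥ x)) : A.PosDef := by
  refine posDef_iff_dotProduct_mulVec.mpr ⟨hA, fun x hx => ?_⟩
  have hunit := h _ (norm_smul_inv_norm (𝕜 := ℝ) hx)
  rw [mulVec_smul, dotProduct_smul, smul_dotProduct, smul_eq_mul, smul_eq_mul, ← mul_assoc]
    at hunit
  exact (mul_pos_iff_of_pos_left (by positivity)).mp hunit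

theorem PosSemidef.exists_posDef_add_smul {A B : Matrix ι ι ℝ} (hA : A.PosSemidef)
    (hB : B.IsHermitian) (hBker : ∀ x, x ≠ 0 → A *ᵥ x = 0 → 0 < x ⬝ᵥ (B *ᵥ x)) :
    ∃ ξ₀ > 0, ∀ ξ : ℝ, 0 < ξ → ξ < ξ₀ → (A + ξ • B).PosDef := by
  obtain ⟨ξ₀, hξ₀, hpos⟩ :=
    (isCompact_sphere (0 : ι → ℝ) 1).exists_pos_forall_add_mul_pos
    A.continuous_dotProduct_mulVec_self.continuousOn
    B.continuous_dotProduct_mulVec_self.continuousOn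
    (fun x _ => hA.dotProduct_mulVec_nonneg x)
    (fun x hx h0 => hBker x (ne_zero_of_mem_sphere one_ne_zero ⟨x, hx⟩)
      ((hA.dotProduct_mulVec_zero_iff x).mp h0))
  refine ⟨ξ₀, hξ₀, fun ξ hξ hξ₀ => posDef_of_forall_norm_eq_one
    (hA.isHermitian.add (hB.smul (IsSelfAdjoint.all ξ))) fun x hx => ?_⟩
  simpa only [add_mulVec, smul_mulVec, dotProduct_add, dotProduct_smul, smul_eq_mul]
    using hpos ξ hξ hξ₀ x (mem_sphere_zero_iff_norm.mpr hx)

theorem PosDef.exists_posDef_add_smul {A B : Matrix ι ι ℝ} (hA : A.PosDef)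
    (hB : B.IsHermitian) : ∃ ξ₀ > 0, ∀ ξ : ℝ, 0 < ξ → ξ < ξ₀ → (A + ξ • B).PosDef :=
  hA.posSemidef.exists_posDef_add_smul hB fun x hx hAx => by
    simpa [hAx] using hA.dotProduct_mulVec_pos hx

end Matrix

theorem lyapunov_modification_general
    (n r : ℕ)
    (Abar P Q H : Matrix (Fin n) (Fin n) ℝ)
    (hPpd : P.PosDef)
    (hLyap : Abarᵀ * P + P * Abar = -Q)
    (hQpsd : Q.PosSemidef)
    (SQ : Matrix (Fin n) (Fin r) ℝ)
    (hKer : ∀ x : Fin n → ℝ, Q *ᵥ x = 0 ↔ ∃ c : Fin r → ℝ, x = SQ *ᵥ c)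
    (hHsym : Hᵀ = H)
    (hX : (-(SQᵀ * (Abarᵀ * H + H * Abar) * SQ)).PosDef) :
    ∃ ξ₀ > 0, ∀ ξ : ℝ, 0 < ξ → ξ < ξ₀ →
      (P + ξ • H).PosDef ∧
      (-(Abarᵀ * (P + ξ • H) + (P + ξ • H) * Abar)).PosDef := by
  have hH : H.IsHermitian := isHermitian_iff_isSymm.mpr hHsym
  have hM : (-(Abarᵀ * H + H * Abar)).IsHermitian := by
    rw [isHermitian_iff_isSymm, IsSymm, transpose_neg, transpose_add, transpose_mul,
      transpose_mul, transpose_transpose, hHsym, add_comm]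
  have hMker : ∀ x, x ≠ 0 → Q *ᵥ x = 0 → 0 < x ⬝ᵥ (-(Abarᵀ * H + H * Abar) *ᵥ x) := by
    intro x hx hQx
    obtain ⟨c, rfl⟩ := (hKer x).mp hQx
    have hc : c ≠ 0 := by rintro rfl; exact hx (mulVec_zero SQ)
    rw [mulVec_dotProduct_mulVec_mulVec, Matrix.mul_neg, Matrix.neg_mul]
    simpa using hX.dotProduct_mulVec_pos hc
  obtain ⟨ξ₁, hξ₁, hP⟩ := hPpd.exists_posDef_add_smul hH
  obtain ⟨ξ₂, hξ₂, hQ⟩ := hQpsd.exists_posDef_add_smul hM hMker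
  refine ⟨min ξ₁ ξ₂, lt_min hξ₁ hξ₂, fun ξ hξ hξmin =>
    ⟨hP ξ hξ (hξmin.trans_le (min_le_left _ _)), ?_⟩⟩
  have hQξ : -(Abarᵀ * (P + ξ • H) + (P + ξ • H) * Abar) =
      Q + ξ • -(Abarᵀ * H + H * Abar) := by
    rw [← neg_neg Q, ← hLyap]
    simp only [Matrix.mul_add, Matrix.add_mul, Matrix.mul_smul, Matrix.smul_mul]
    module
  exact hQξ ▸ hQ ξ hξ (hξmin.trans_le (min_le_right _ _))

/-- Lemma on modifying a Lyapunov matrix P by ξH. -/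
theorem lyapunov_modification
    (n r : ℕ)
    (Abar P Q H : Matrix (Fin n) (Fin n) ℝ)
    (hHurwitz : ∀ z ∈ spectrum ℂ (Abar.map (Complex.ofReal)), z.re < 0)
    (hPpd : P.PosDef)
    (hLyap : Abarᵀ * P + P * Abar = -Q)
    (hQpsd : Q.PosSemidef)
    (SQ : Matrix (Fin n) (Fin r) ℝ)
    (hOrth : SQᵀ * SQ = 1)
    (hKer : ∀ x : Fin n → ℝ, Q *ᵥ x = 0 ↔ ∃ c : Fin r → ℝ, x = SQ *ᵥ c)
    (hHsym : Hᵀ = H)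
    (hX : (-(SQᵀ * (Abarᵀ * H + H * Abar) * SQ)).PosDef) :
    ∃ ξ₀ > 0, ∀ ξ : ℝ, 0 < ξ → ξ < ξ₀ →
      (P + ξ • H).PosDef ∧
      (-(Abarᵀ * (P + ξ • H) + (P + ξ • H) * Abar)).PosDef :=
  lyapunov_modification_general n r Abar P Q H hPpd hLyap hQpsd SQ hKer hHsym hX
end

section
/- Conversely, if Ā is Hurwitz, ĀᵀP + PĀ = -Q ≤ 0 with P = Pᵀ > 0, and there exists a symmetric positive definite P̃ with ĀᵀP̃ + P̃Ā < 0, then the symmetric matrix H := P̃ - P satisfies S_Qᵀ(ĀᵀH + HĀ)S_Q < 0, where the columns of S_Q are an orthonormal basis of ker Q. -/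
/-!
Since `Q = -(ĀᵀP + PĀ)` vanishes on `ker Q = range S_Q`, compressing the Lyapunov form of
`H = P̃ - P` to `ker Q` gives the compression of the Lyapunov form of `P̃` alone, and a
negative definite form stays negative definite under the injective map `S_Q`.
-/

open Matrix

namespace Matrix

variable {l m n R : Type*} [Fintype m] [CommRing R]

lemma mul_eq_zero_of_forall_mulVec_mulVec_eq_zero [Fintype n] {A : Matrix l m R}
    {B : Matrix m n R} (h : ∀ v, A *ᵥ (B *ᵥ v) = 0) : A * B = 0 :=
  ext_iff_mulVec.2 fun v => by rw [← mulVec_mulVec, h, zero_mulVec]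

lemma mulVec_injective_of_mul_eq_one [Fintype n] [DecidableEq n] {B : Matrix m n R} {C : Matrix n m R} (h : C * B = 1) :
    Function.Injective B.mulVec :=
  Function.LeftInverse.injective (g := C.mulVec) fun v => by
    rw [mulVec_mulVec, h, one_mulVec]

lemma neg_transpose_mul_lyapunov_sub_mul {A P P' Q : Matrix m m R} {S : Matrix m n R}
    (hLyap : Aᵀ * P + P * A = -Q) (hQS : Q * S = 0) :
    -(Sᵀ * (Aᵀ * (P' - P) + (P' - P) * A) * S) = Sᵀ * -(Aᵀ * P' + P' * A) * S := by
  have hsplit : Aᵀ * (P' - P) + (P' - P) * A = (Aᵀ * P' + P' * A) + Q := by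
    rw [← neg_neg Q, ← hLyap]
    noncomm_ring
  rw [hsplit, Matrix.mul_add, Matrix.add_mul, Matrix.mul_assoc Sᵀ Q, hQS, Matrix.mul_zero,
    add_zero, Matrix.mul_neg, Matrix.neg_mul]

end Matrix

theorem lyapunov_modification_converse_general
    (n r : ℕ)
    (Abar P Q Ptilde : Matrix (Fin n) (Fin n) ℝ)
    (hLyap : Abarᵀ * P + P * Abar = -Q)
    (hPtLyap : (-(Abarᵀ * Ptilde + Ptilde * Abar)).PosDef)
    (SQ : Matrix (Fin n) (Fin r) ℝ)
    (hOrth : SQᵀ * SQ = 1)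
    (hKer : ∀ x : Fin n → ℝ, Q *ᵥ x = 0 ↔ ∃ c : Fin r → ℝ, x = SQ *ᵥ c) :
    (-(SQᵀ * (Abarᵀ * (Ptilde - P) + (Ptilde - P) * Abar) * SQ)).PosDef := by
  have hQS : Q * SQ = 0 :=
    mul_eq_zero_of_forall_mulVec_mulVec_eq_zero fun c => (hKer _).2 ⟨c, rfl⟩
  rw [neg_transpose_mul_lyapunov_sub_mul hLyap hQS, ← conjTranspose_eq_transpose_of_trivial]
  exact hPtLyap.conjTranspose_mul_mul_same (mulVec_injective_of_mul_eq_one hOrth)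

/-- converse of the Lyapunov modification lemma. -/
theorem lyapunov_modification_converse
    (n r : ℕ)
    (Abar P Q Ptilde : Matrix (Fin n) (Fin n) ℝ)
    (hHurwitz : ∀ z ∈ spectrum ℂ (Abar.map (Complex.ofReal)), z.re < 0)
    (hPpd : P.PosDef)
    (hLyap : Abarᵀ * P + P * Abar = -Q)
    (hQpsd : Q.PosSemidef)
    (hPtsym : Ptildeᵀ = Ptilde)
    (hPtpd : Ptilde.PosDef)
    (hPtLyap : (-(Abarᵀ * Ptilde + Ptilde * Abar)).PosDef)
    (SQ : Matrix (Fin n) (Fin r) ℝ)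
    (hOrth : SQᵀ * SQ = 1)
    (hKer : ∀ x : Fin n → ℝ, Q *ᵥ x = 0 ↔ ∃ c : Fin r → ℝ, x = SQ *ᵥ c) :
    (-(SQᵀ * (Abarᵀ * (Ptilde - P) + (Ptilde - P) * Abar) * SQ)).PosDef :=
  lyapunov_modification_converse_general n r Abar P Q Ptilde hLyap hPtLyap SQ hOrth hKer
end

section
/- Let 0 < ε ≤ 0.5 and μ̄ = 0.5 - ε. Suppose H is the symmetric 4×4 matrix with nonzero entries only h13, h14, h23, h24 (and their transposes) satisfying: h13 < 0; h14 = -C2(h13 - h23)/(2C1); h23 < (L2/L1)·((1-ε)/ε)·h13 < 0; and h24 > C2·((h23 - h13)²μ̄² + h13 h23)/(-4 h13 ε C1) > 0. Then for every μ ∈ [-μ̄, μ̄], the 3×3 matrix X(A(μ)) = S_Qᵀ(A(μ)ᵀH + H A(μ))S_Q with S_Q = [e1, e2, e3] is negative definite. -/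
/-!
Only the first three rows and columns of `Aᵀ H + H A` enter, and `-X(A(μ))` turns out to be
block diagonal, `!![a, b, 0; b, c, 0; 0, 0, d]`; the prescribed `h14` is what makes `b`
proportional to `μ`. Such a matrix is positive definite as soon as `a > 0`, `d > 0` and `b² < a c`. Here `a > 0` is immediate, `d > 0` is
the bound on `h23` (using `1 + 2μ ≥ 2ε`), and `b² < a c` reduces, after clearing denominators, to
`C2 (μ² (h23 - h13)² + h13 h23) < 2 (1 - 2μ) (-h13) h24 C1`, which follows from the bound on
`h24` since `μ² ≤ μ̄²` and `1 - 2μ ≥ 2ε`.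
-/

open Matrix

lemma quadratic_pos_of_sq_lt_mul {a b c x y : ℝ} (ha : 0 < a) (hbc : b ^ 2 < a * c)
    (hxy : x ≠ 0 ∨ y ≠ 0) : 0 < a * x ^ 2 + 2 * b * x * y + c * y ^ 2 := by
  have hsq : a * (a * x ^ 2 + 2 * b * x * y + c * y ^ 2)
      = (a * x + b * y) ^ 2 + (a * c - b ^ 2) * y ^ 2 := by ring
  refine pos_of_mul_pos_right (hsq ▸ ?_) ha.le
  have hdisc : 0 < a * c - b ^ 2 := sub_pos.2 hbc
  rcases eq_or_ne y 0 with rfl | hy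
  · have hx : x ≠ 0 := by simpa using hxy
    simp only [mul_zero, add_zero, zero_pow two_ne_zero]
    positivity
  · positivity

lemma posDef_blockDiag_of_sq_lt_mul {a b c d : ℝ} (ha : 0 < a) (hbc : b ^ 2 < a * c) (hd : 0 < d) :
    (!![a, b, 0; b, c, 0; 0, 0, d]).PosDef := by
  rw [posDef_iff_dotProduct_mulVec]
  refine ⟨?_, fun x hx => ?_⟩
  · ext i j
    fin_cases i <;> fin_cases j <;> simp
  have hform : star x ⬝ᵥ (!![a, b, 0; b, c, 0; 0, 0, d] *ᵥ x)
      = (a * x 0 ^ 2 + 2 * b * x 0 * x 1 + c * x 1 ^ 2) + d * x 2 ^ 2 := by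
    simp only [dotProduct, Pi.star_apply, star_trivial, mulVec, of_apply, cons_val', cons_val_fin_one,
      Fin.sum_univ_three, Fin.isValue, cons_val_zero, cons_val_one, cons_val, zero_mul, add_zero,
      zero_add]
    ring
  rw [hform]
  by_cases h01 : x 0 ≠ 0 ∨ x 1 ≠ 0
  · have := quadratic_pos_of_sq_lt_mul ha hbc h01
    positivity
  · obtain ⟨h0, h1⟩ : x 0 = 0 ∧ x 1 = 0 := by simpa [not_or] using h01
    have h2 : x 2 ≠ 0 := fun h2 => hx (by ext i; fin_cases i <;> simp [h0, h1, h2])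
    simp [h0, h1]
    positivity

lemma inv_smul_diagonal {n K : Type*} [Fintype n] [DecidableEq n] [Field K] {k : K} (hk : k ≠ 0)
    {v : n → K} (hv : ∀ i, v i ≠ 0) : (k • diagonal v)⁻¹ = diagonal fun i => (k * v i)⁻¹ := by
  apply inv_eq_right_inv
  rw [smul_mul, diagonal_mul_diagonal, ← diagonal_smul, ← diagonal_one]
  congr 1
  funext i
  simp [hk, hv]

lemma transpose_mul_mul_eq_submatrix_castSucc {R : Type*} [Semiring R] {n : ℕ}
    (M : Matrix (Fin (n + 1)) (Fin (n + 1)) R) :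
    (of fun (i : Fin (n + 1)) (j : Fin n) => if (i : ℕ) = j then (1 : R) else 0)ᵀ * M *
      (of fun (i : Fin (n + 1)) (j : Fin n) => if (i : ℕ) = j then (1 : R) else 0)
      = M.submatrix Fin.castSucc Fin.castSucc := by
  have hS : (of fun (i : Fin (n + 1)) (j : Fin n) => if (i : ℕ) = j then (1 : R) else 0)
      = (1 : Matrix (Fin (n + 1)) (Fin (n + 1)) R).submatrix (Equiv.refl _) Fin.castSucc := by
    ext i j
    simp [one_apply, Fin.ext_iff]
  rw [hS, transpose_submatrix, transpose_one, mul_submatrix_one,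
    one_submatrix_mul]
  rfl

lemma X_last_diag_pos {L1 L2 ε μ h13 h23 : ℝ} (hL1 : 0 < L1) (hL2 : 0 < L2) (hε : 0 < ε)
    (hε1 : ε ≤ 1) (hμ : ε ≤ 1 / 2 + μ) (hh13 : h13 < 0)
    (hh23 : h23 < L2 / L1 * ((1 - ε) / ε) * h13) :
    0 < (1 - 2 * μ) * h13 / L1 - (1 + 2 * μ) * h23 / L2 := by
  have hratio : (1 - ε) / ε * -h13 / L1 < -h23 / L2 := by
    rw [lt_div_iff₀ hL2]
    calc (1 - ε) / ε * -h13 / L1 * L2 = -(L2 / L1 * ((1 - ε) / ε) * h13) := by ring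
      _ < -h23 := neg_lt_neg hh23
  have hnonneg : 0 ≤ (1 - ε) / ε * -h13 / L1 := by
    have : 0 ≤ 1 - ε := by linarith
    have : 0 < -h13 := neg_pos.2 hh13
    positivity
  have key : (1 - 2 * μ) * -h13 / L1 < (1 + 2 * μ) * (-h23 / L2) :=
    calc (1 - 2 * μ) * -h13 / L1 ≤ 2 * (1 - ε) * -h13 / L1 := by
          gcongr
          · linarith
          · linarith
      _ = 2 * ε * ((1 - ε) / ε * -h13 / L1) := by field_simp
      _ ≤ (1 + 2 * μ) * ((1 - ε) / ε * -h13 / L1) := by gcongr; linarith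
      _ < (1 + 2 * μ) * (-h23 / L2) := by gcongr; linarith
  calc 0 < (1 + 2 * μ) * (-h23 / L2) - (1 - 2 * μ) * -h13 / L1 := sub_pos.2 key
    _ = (1 - 2 * μ) * h13 / L1 - (1 + 2 * μ) * h23 / L2 := by ring

lemma X_offDiag_sq_lt_diag_mul {C1 C2 ε μ μbar h13 h23 h24 : ℝ} (hC1 : 0 < C1) (hC2 : 0 < C2)
    (hε : 0 < ε) (hμ : ε ≤ 1 / 2 - μ) (hμbar : μ ^ 2 ≤ μbar ^ 2) (hh13 : h13 < 0)
    (hh24 : C2 / C1 * (((h23 - h13) ^ 2 * μbar ^ 2 + h13 * h23) / (-h13 * 4 * ε)) < h24)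
    (hbound : 0 < C2 / C1 * (((h23 - h13) ^ 2 * μbar ^ 2 + h13 * h23) / (-h13 * 4 * ε))) :
    (μ * (h13 + h23) / C1) ^ 2
      < (1 - 2 * μ) * -h13 / C1 * ((1 + 2 * μ) * h23 / C1 + 2 * h24 / C2) := by
  set N := (h23 - h13) ^ 2 * μbar ^ 2 + h13 * h23 with hN_def
  have h13_neg : 0 < -h13 := neg_pos.2 hh13
  have hden : 0 < -h13 * 4 * ε * C1 := by positivity
  have hbound_eq : C2 / C1 * (N / (-h13 * 4 * ε)) = C2 * N / (-h13 * 4 * ε * C1) := by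
    field_simp
  rw [hbound_eq] at hh24 hbound
  have hh24_pos : 0 < h24 := hbound.trans hh24
  have hN : C2 * N < h24 * (-h13 * 4 * ε * C1) := (div_lt_iff₀ hden).1 hh24
  have hkey : C2 * ((h23 - h13) ^ 2 * μ ^ 2 + h13 * h23) < 2 * (1 - 2 * μ) * -h13 * h24 * C1 :=
    calc C2 * ((h23 - h13) ^ 2 * μ ^ 2 + h13 * h23) ≤ C2 * N := by rw [hN_def]; gcongr
      _ < h24 * (-h13 * 4 * ε * C1) := hN
      _ ≤ 2 * (1 - 2 * μ) * -h13 * h24 * C1 := by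
          have : 0 ≤ -h13 * h24 * C1 := by positivity
          nlinarith
  have hdiff : (1 - 2 * μ) * -h13 / C1 * ((1 + 2 * μ) * h23 / C1 + 2 * h24 / C2)
      - (μ * (h13 + h23) / C1) ^ 2
      = (2 * (1 - 2 * μ) * -h13 * h24 * C1 - C2 * ((h23 - h13) ^ 2 * μ ^ 2 + h13 * h23))
        / (C1 ^ 2 * C2) := by
    field_simp
    ring
  rw [← sub_pos, hdiff]
  exact div_pos (sub_pos.2 hkey) (by positivity)

theorem X_negative_definite_general
    (L1 L2 C1 C2 R : ℝ) (hL1 : 0 < L1) (hL2 : 0 < L2) (hC1 : 0 < C1)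
    (hC2 : 0 < C2)
    (P : Matrix (Fin 4) (Fin 4) ℝ) (hP : P = (1/2 : ℝ) • Matrix.diagonal ![L1, L2, C1, C2])
    (A0q E0q : Matrix (Fin 4) (Fin 4) ℝ)
    (hA0q : A0q = !![0,0,-1/2,0; 0,0,1/2,1; 1/2,-1/2,0,0; 0,-1,0,-1/R])
    (hE0q : E0q = !![0,0,1,0; 0,0,1,0; -1,-1,0,0; 0,0,0,0])
    (A : ℝ → Matrix (Fin 4) (Fin 4) ℝ)
    (hA : ∀ μ, A μ = (1/2 : ℝ) • (P⁻¹ * (A0q + μ • E0q)))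
    (ε : ℝ) (hε : 0 < ε ∧ ε ≤ 0.5)
    (μbar : ℝ) (hμbar : μbar = 0.5 - ε)
    (h13 h14 h23 h24 : ℝ)
    (hh13 : h13 < 0)
    (hh14 : h14 = -(C2 * (h13 - h23)) / (2 * C1))
    (hh23 : h23 < (L2 / L1) * ((1 - ε) / ε) * h13 ∧ (L2 / L1) * ((1 - ε) / ε) * h13 < 0)
    (hh24 : h24 > (C2 / C1) * (((h23 - h13)^2 * μbar^2 + h13 * h23) / (-h13 * 4 * ε)) ∧
            (C2 / C1) * (((h23 - h13)^2 * μbar^2 + h13 * h23) / (-h13 * 4 * ε)) > 0)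
    (H : Matrix (Fin 4) (Fin 4) ℝ)
    (hH : H = !![0,0,h13,h14; 0,0,h23,h24; h13,h23,0,0; h14,h24,0,0])
    (SQ : Matrix (Fin 4) (Fin 3) ℝ)
    (hSQ : SQ = Matrix.of fun (i : Fin 4) (j : Fin 3) => if (i : ℕ) = (j : ℕ) then (1:ℝ) else 0) :
    ∀ μ ∈ Set.Icc (-μbar) μbar,
      (-(SQᵀ * ((A μ)ᵀ * H + H * A μ) * SQ)).PosDef := by
  rintro μ ⟨hμlo, hμhi⟩
  norm_num at hε hμbar
  have hAμ : A μ = !![0, 0, (μ - 1 / 2) / L1, 0; 0, 0, (μ + 1 / 2) / L2, 1 / L2;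
      (1 / 2 - μ) / C1, (-1 / 2 - μ) / C1, 0, 0; 0, -1 / C2, 0, -1 / (R * C2)] := by
    rw [hA, hP, inv_smul_diagonal (by norm_num) fun i => by fin_cases i <;> positivity, hA0q, hE0q]
    ext i j
    fin_cases i <;> fin_cases j <;> simp [mul_apply, Fin.sum_univ_four] <;> field_simp <;> ring
  have hX : -(SQᵀ * ((A μ)ᵀ * H + H * A μ) * SQ) =
      !![(1 - 2 * μ) * -h13 / C1, μ * (h13 + h23) / C1, 0;
         μ * (h13 + h23) / C1, (1 + 2 * μ) * h23 / C1 + 2 * h24 / C2, 0;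
         0, 0, (1 - 2 * μ) * h13 / L1 - (1 + 2 * μ) * h23 / L2] := by
    rw [hSQ, transpose_mul_mul_eq_submatrix_castSucc, hAμ, hH, hh14]
    ext i j
    fin_cases i <;> fin_cases j <;>
      simp [mul_apply, Fin.sum_univ_four] <;> field_simp <;> ring
  have hμ_lt : 0 < 1 - 2 * μ := by linarith
  have h13_neg : 0 < -h13 := neg_pos.2 hh13
  rw [hX]
  exact posDef_blockDiag_of_sq_lt_mul (by positivity)
    (X_offDiag_sq_lt_diag_mul hC1 hC2 hε.1 (by linarith) (sq_le_sq' hμlo hμhi) hh13 hh24.1 hh24.2)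
    (X_last_diag_pos hL1 hL2 hε.1 (by linarith) (by linarith) hh13 hh23.1)

/-- under the stated sign conditions on the entries of H,
X(A(μ)) = S_Qᵀ(A(μ)ᵀH + HA(μ))S_Q is negative definite for all μ ∈ [-μ̄, μ̄]. -/
theorem X_negative_definite
    (L1 L2 C1 C2 R : ℝ) (hL1 : 0 < L1) (hL2 : 0 < L2) (hC1 : 0 < C1)
    (hC2 : 0 < C2) (hR : 0 < R)
    (P : Matrix (Fin 4) (Fin 4) ℝ) (hP : P = (1/2 : ℝ) • Matrix.diagonal ![L1, L2, C1, C2])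
    (A0q E0q : Matrix (Fin 4) (Fin 4) ℝ)
    (hA0q : A0q = !![0,0,-1/2,0; 0,0,1/2,1; 1/2,-1/2,0,0; 0,-1,0,-1/R])
    (hE0q : E0q = !![0,0,1,0; 0,0,1,0; -1,-1,0,0; 0,0,0,0])
    (A : ℝ → Matrix (Fin 4) (Fin 4) ℝ)
    (hA : ∀ μ, A μ = (1/2 : ℝ) • (P⁻¹ * (A0q + μ • E0q)))
    (ε : ℝ) (hε : 0 < ε ∧ ε ≤ 0.5)
    (μbar : ℝ) (hμbar : μbar = 0.5 - ε)
    (h13 h14 h23 h24 : ℝ)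
    (hh13 : h13 < 0)
    (hh14 : h14 = -(C2 * (h13 - h23)) / (2 * C1))
    (hh23 : h23 < (L2 / L1) * ((1 - ε) / ε) * h13 ∧ (L2 / L1) * ((1 - ε) / ε) * h13 < 0)
    (hh24 : h24 > (C2 / C1) * (((h23 - h13)^2 * μbar^2 + h13 * h23) / (-h13 * 4 * ε)) ∧
            (C2 / C1) * (((h23 - h13)^2 * μbar^2 + h13 * h23) / (-h13 * 4 * ε)) > 0)
    (H : Matrix (Fin 4) (Fin 4) ℝ)
    (hH : H = !![0,0,h13,h14; 0,0,h23,h24; h13,h23,0,0; h14,h24,0,0])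
    (SQ : Matrix (Fin 4) (Fin 3) ℝ)
    (hSQ : SQ = Matrix.of fun (i : Fin 4) (j : Fin 3) => if (i : ℕ) = (j : ℕ) then (1:ℝ) else 0) :
    ∀ μ ∈ Set.Icc (-μbar) μbar,
      (-(SQᵀ * ((A μ)ᵀ * H + H * A μ) * SQ)).PosDef :=
  X_negative_definite_general L1 L2 C1 C2 R hL1 hL2 hC1 hC2 P hP A0q E0q hA0q hE0q A hA ε hε μbar
    hμbar h13 h14 h23 h24 hh13 hh14 hh23 hh24 H hH SQ hSQ
end

section
/- For the mode matrices A_I, A_II of the semi-quasi-Z-source inverter, any time durations t_I, t_II > 0 and ε ≥ 0, the matrix M_ε = e^{A_I ε} e^{A_II t_II} e^{A_I t_I} satisfies M_εᵀ P M_ε − P ≤ 0 (negative semidefinite), where P = (1/2)diag(L1,L2,C1,C2). -/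
/-!
Both modes are passive with respect to the stored energy `xᵀ P x`: from `A = ½ P⁻¹ A^q` one gets
`AᵀP + PA = ½ (A^qᵀ + A^q) = -diag(0, 0, 0, 1/R)`, so along `ẋ = A x` the energy has derivative
`xᵀ (AᵀP + PA) x ≤ 0`. Hence `exp (t A)ᵀ P exp (t A) ≤ P` for `t ≥ 0`, and this property passes to
products because `P - (MN)ᵀ P (MN) = (P - Nᵀ P N) + Nᵀ (P - Mᵀ P M) N`.
-/

open Matrix NormedSpace

namespace Matrix

variable {n : Type*} [Fintype n]

/-- `Mᴴ P M ≤ P` in the Loewner order. -/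
def NonexpansiveWrt {R : Type*} [Ring R] [PartialOrder R] [StarRing R] (P M : Matrix n n R) :
    Prop :=
  (P - Mᴴ * P * M).PosSemidef

theorem NonexpansiveWrt.mul {R : Type*} [CommRing R] [PartialOrder R] [StarRing R]
    [AddLeftMono R] {P M N : Matrix n n R} (hM : NonexpansiveWrt P M)
    (hN : NonexpansiveWrt P N) : NonexpansiveWrt P (M * N) := by
  have h : P - (M * N)ᴴ * P * (M * N) = (P - Nᴴ * P * N) + Nᴴ * (P - Mᴴ * P * M) * N := by
    simp only [conjTranspose_mul, mul_sub, sub_mul, Matrix.mul_assoc]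
    abel
  unfold NonexpansiveWrt
  rw [h]
  exact hN.add (hM.conjTranspose_mul_mul_same N)

theorem dotProduct_mulVec_add_dotProduct_mulVec (P A : Matrix n n ℝ) (y : n → ℝ) :
    (A *ᵥ y) ⬝ᵥ P *ᵥ y + y ⬝ᵥ P *ᵥ (A *ᵥ y) = y ⬝ᵥ (Aᵀ * P + P * A) *ᵥ y := by
  rw [add_mulVec, dotProduct_add, ← mulVec_mulVec, ← mulVec_mulVec, dotProduct_mulVec y Aᵀ,
    vecMul_transpose]

variable [DecidableEq n]

theorem hasDerivAt_dotProduct_mulVec {y : ℝ → n → ℝ} {y' : n → ℝ} {s : ℝ} (P : Matrix n n ℝ)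
    (hy : HasDerivAt y y' s) :
    HasDerivAt (fun t => y t ⬝ᵥ P *ᵥ y t) (y' ⬝ᵥ P *ᵥ y s + y s ⬝ᵥ P *ᵥ y') s := by
  have := ((toLinearMap₂' ℝ P).toContinuousBilinearMap).hasDerivAt_of_bilinear
    (fun _ => hy) (fun _ => hy)
  simpa only [LinearMap.toContinuousBilinearMap_apply, toLinearMap₂'_apply', add_comm] using this

theorem hasDerivAt_exp_smul_mulVec (A : Matrix n n ℝ) (x : n → ℝ) (s : ℝ) :
    HasDerivAt (fun t : ℝ => exp (t • A) *ᵥ x) (A *ᵥ (exp (s • A) *ᵥ x)) s := by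
  -- differentiating `exp` needs some normed-algebra structure on matrices; any one will do
  let := Matrix.linftyOpNormedRing (n := n) (α := ℝ)
  let := Matrix.linftyOpNormedAlgebra (n := n) (R := ℝ) (α := ℝ)
  have := ((mulVecBilin ℝ ℝ).toContinuousBilinearMap).hasDerivAt_of_bilinear
    (fun _ => hasDerivAt_exp_smul_const' A s) (fun _ => hasDerivAt_const s x)
  simp only [LinearMap.toContinuousBilinearMap_apply, mulVecBilin_apply, mulVec_zero, zero_add,
    ← mulVec_mulVec] at this
  exact this

theorem dotProduct_mulVec_exp_smul_le {P A : Matrix n n ℝ}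
    (hA : (-(Aᵀ * P + P * A)).PosSemidef) {t : ℝ} (ht : 0 ≤ t) (x : n → ℝ) :
    (exp (t • A) *ᵥ x) ⬝ᵥ P *ᵥ (exp (t • A) *ᵥ x) ≤ x ⬝ᵥ P *ᵥ x := by
  set y : ℝ → n → ℝ := fun s => exp (s • A) *ᵥ x
  have hderiv (s : ℝ) : HasDerivAt (fun t => y t ⬝ᵥ P *ᵥ y t)
      (y s ⬝ᵥ (Aᵀ * P + P * A) *ᵥ y s) s := by
    rw [← dotProduct_mulVec_add_dotProduct_mulVec]
    exact hasDerivAt_dotProduct_mulVec P (hasDerivAt_exp_smul_mulVec A x s)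
  have hdecay (s : ℝ) : y s ⬝ᵥ (Aᵀ * P + P * A) *ᵥ y s ≤ 0 := by
    have := hA.dotProduct_mulVec_nonneg (y s)
    rw [star_trivial, neg_mulVec, dotProduct_neg] at this
    linarith
  simpa [y] using antitone_of_hasDerivAt_nonpos hderiv hdecay ht

theorem nonexpansiveWrt_exp_smul {P A : Matrix n n ℝ} (hP : P.IsHermitian)
    (hA : (-(Aᵀ * P + P * A)).PosSemidef) {t : ℝ} (ht : 0 ≤ t) :
    NonexpansiveWrt P (exp (t • A)) := by
  refine .of_dotProduct_mulVec_nonneg (hP.sub (isHermitian_conjTranspose_mul_mul _ hP)) fun x => ?_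
  rw [star_trivial, sub_mulVec, dotProduct_sub, sub_nonneg, conjTranspose_eq_transpose_of_trivial,
    Matrix.mul_assoc, ← mulVec_mulVec, dotProduct_mulVec, vecMul_transpose, ← mulVec_mulVec]
  exact dotProduct_mulVec_exp_smul_le hA ht x

theorem transpose_mul_add_mul_eq_smul_of_eq_smul_inv_mul {K : Type*} [Field K]
    {P Q A : Matrix n n K} (hP : P.IsSymm) (hdet : IsUnit P.det) {c : K} (hA : A = c • (P⁻¹ * Q)) :
    Aᵀ * P + P * A = c • (Qᵀ + Q) := by
  have hPA : P * A = c • Q := by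
    rw [hA, Matrix.mul_smul, ← Matrix.mul_assoc, mul_nonsing_inv P hdet, Matrix.one_mul]
  have hAP : Aᵀ * P = c • Qᵀ := by
    rw [← transpose_transpose (Aᵀ * P), transpose_mul, transpose_transpose, hP.eq, hPA,
      transpose_smul]
  rw [hAP, hPA, smul_add]

end Matrix

/-- M_ε = e^{A_I ε} e^{A_II t_II} e^{A_I t_I} satisfies M_εᵀPM_ε - P ≤ 0. -/
theorem Meps_nonexpansive
    (L1 L2 C1 C2 R : ℝ) (hL1 : 0 < L1) (hL2 : 0 < L2) (hC1 : 0 < C1)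
    (hC2 : 0 < C2) (hR : 0 < R)
    (P : Matrix (Fin 4) (Fin 4) ℝ) (hP : P = (1/2 : ℝ) • Matrix.diagonal ![L1, L2, C1, C2])
    (AIq AIIq : Matrix (Fin 4) (Fin 4) ℝ)
    (hAIq : AIq = !![0,0,0,0; 0,0,1,1; 0,-1,0,0; 0,-1,0,-1/R])
    (hAIIq : AIIq = !![0,0,-1,0; 0,0,0,1; 1,0,0,0; 0,-1,0,-1/R])
    (AI AII : Matrix (Fin 4) (Fin 4) ℝ)
    (hAI : AI = (1/2 : ℝ) • (P⁻¹ * AIq)) (hAII : AII = (1/2 : ℝ) • (P⁻¹ * AIIq))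
    (tI tII ε : ℝ) (htI : 0 < tI) (htII : 0 < tII) (hε : 0 ≤ ε)
    (Mε : Matrix (Fin 4) (Fin 4) ℝ)
    (hMε : Mε = NormedSpace.exp (ε • AI) * NormedSpace.exp (tII • AII) *
                NormedSpace.exp (tI • AI)) :
    (P - Mεᵀ * P * Mε).PosSemidef := by
  have hPpos : P.PosDef := hP ▸
    (PosDef.diagonal fun i => by fin_cases i <;> simpa).smul one_half_pos
  have hPsymm : P.IsSymm := hP ▸ (isSymm_diagonal _).smul _
  have hdet : IsUnit P.det := (isUnit_iff_isUnit_det P).mp hPpos.isUnit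
  have hdiss : (diagonal ![0, 0, 0, 1 / R]).PosSemidef :=
    PosSemidef.diagonal fun i => by fin_cases i <;> simp [hR.le]
  have hI : (-(AIᵀ * P + P * AI)).PosSemidef := by
    convert hdiss
    rw [transpose_mul_add_mul_eq_smul_of_eq_smul_inv_mul hPsymm hdet hAI, hAIq]
    ext i j
    fin_cases i <;> fin_cases j <;> simp [← two_mul, neg_div]
  have hII : (-(AIIᵀ * P + P * AII)).PosSemidef := by
    convert hdiss
    rw [transpose_mul_add_mul_eq_smul_of_eq_smul_inv_mul hPsymm hdet hAII, hAIIq]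
    ext i j
    fin_cases i <;> fin_cases j <;> simp [← two_mul, neg_div]
  have hM : NonexpansiveWrt P Mε := by
    rw [hMε]
    exact ((nonexpansiveWrt_exp_smul hPpos.isHermitian hI hε).mul
      (nonexpansiveWrt_exp_smul hPpos.isHermitian hII htII.le)).mul
      (nonexpansiveWrt_exp_smul hPpos.isHermitian hI htI.le)
  simpa only [NonexpansiveWrt, conjTranspose_eq_transpose_of_trivial] using hM
end

section
/- The largest subspace invariant under A_I and contained in ker Q (Q = diag(0,0,0,1/R)) is span{e1}, and the largest subspace invariant under A_II contained in ker Q is span{e1, e3}. In particular neither pair (A_I, C) nor (A_II, C) with C = (0,0,0,R^{-1/2}) is detectable. -/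
/-!
Since `P⁻¹ A^q / 2 = diag(L₁, L₂, C₁, C₂)⁻¹ A^q`, both matrices are explicit, and `ker Q` is the
hyperplane of vectors with vanishing last coordinate. The largest `A`-invariant subspace inside
`ker Q` consists of the `x` with `Aᵏ x ∈ ker Q` for all `k`. For `A_I`, the last coordinates of
`x`, `A_I x`, `A_I² x` successively force `x₄`, `x₂`, `x₃` to vanish; for `A_II`, those of `x`
and `A_II x` already cut out `span{e₁, e₃}`, on which `A_II` acts as the `L₁C₁` oscillator.
Hence `e₁ ∈ ker A_I` and the complexified oscillation of `A_II`, with frequency `1/√(L₁C₁)`,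
are unobservable modes on the imaginary axis.
-/

open Matrix

theorem half_smul_mul_inv_half_smul_diagonal {n K : Type*} [Fintype n] [DecidableEq n] [Field K]
    [NeZero (2 : K)] (d : n → K) (hd : ∀ i, d i ≠ 0) (M : Matrix n n K) :
    (1 / 2 : K) • (((1 / 2 : K) • diagonal d)⁻¹ * M) = diagonal d⁻¹ * M := by
  have hinv : ((1 / 2 : K) • diagonal d)⁻¹ = (2 : K) • diagonal d⁻¹ := by
    refine inv_eq_left_inv ?_
    rw [smul_mul_smul_comm, diagonal_mul_diagonal, ← diagonal_one]
    ext i j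
    by_cases hij : i = j
    · subst hij; simp [hd i, two_ne_zero]
    · simp [hij]
  rw [hinv, smul_mul_assoc, smul_smul, one_div, inv_mul_cancel₀ two_ne_zero, one_smul]

section Invariance

variable {n K : Type*} [Fintype n] [DecidableEq n] [Field K]

def IsLargestInvariantIn (A : Matrix n n K) (W T : Submodule K (n → K)) : Prop :=
  T ≤ W ∧ (∀ x ∈ T, A *ᵥ x ∈ T) ∧
    ∀ S : Submodule K (n → K), (∀ x ∈ S, A *ᵥ x ∈ S) → S ≤ W → S ≤ T

theorem pow_mulVec_mem_of_invariant {A : Matrix n n K} {S : Submodule K (n → K)}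
    (hS : ∀ x ∈ S, A *ᵥ x ∈ S) {x : n → K} (hx : x ∈ S) (k : ℕ) : (A ^ k) *ᵥ x ∈ S := by
  induction k with
  | zero => simpa using hx
  | succ k ih => simpa [pow_succ', ← mulVec_mulVec] using hS _ ih

theorem isLargestInvariantIn_of_forall_pow {A : Matrix n n K} {W T : Submodule K (n → K)}
    (hTW : T ≤ W) (hT : ∀ x ∈ T, A *ᵥ x ∈ T) (hmax : ∀ x, (∀ k, (A ^ k) *ᵥ x ∈ W) → x ∈ T) :
    IsLargestInvariantIn A W T :=
  ⟨hTW, hT, fun _ hS hSW x hx => hmax x fun k => hSW (pow_mulVec_mem_of_invariant hS hx k)⟩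

end Invariance

section Detectability

variable {n : Type*} [Fintype n]

/-- By the Popov–Belevitch–Hautus test, `(A, c)` is detectable iff there is no such mode. -/
def HasUndetectableMode (A : Matrix n n ℝ) (c : n → ℝ) : Prop :=
  ∃ z : ℂ, 0 ≤ z.re ∧ ∃ v : n → ℂ, v ≠ 0 ∧
    A.map Complex.ofReal *ᵥ v = z • v ∧ (fun i => (c i : ℂ)) ⬝ᵥ v = 0

theorem hasUndetectableMode_of_rotation {A : Matrix n n ℝ} {c u w : n → ℝ} (ω : ℝ) (hu : u ≠ 0)
    (hAu : A *ᵥ u = -ω • w) (hAw : A *ᵥ w = ω • u) (hcu : c ⬝ᵥ u = 0) (hcw : c ⬝ᵥ w = 0) :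
    HasUndetectableMode A c := by
  let complexify (x : n → ℝ) : n → ℂ := fun i => x i
  have hmap (x : n → ℝ) : A.map Complex.ofReal *ᵥ complexify x = complexify (A *ᵥ x) :=
    funext fun i => (RingHom.map_mulVec Complex.ofRealHom A x i).symm
  have hdot (x : n → ℝ) : complexify c ⬝ᵥ complexify x = ((c ⬝ᵥ x : ℝ) : ℂ) := by
    simp [complexify, dotProduct]
  refine ⟨ω * Complex.I, by simp, complexify u + Complex.I • complexify w, ?_, ?_, ?_⟩
  · intro hv
    apply hu
    ext i
    simpa [complexify] using congrArg Complex.re (congrFun hv i)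
  · rw [mulVec_add, mulVec_smul, hmap, hmap, hAu, hAw]
    ext i
    simp only [complexify, Pi.add_apply, Pi.smul_apply, smul_eq_mul, Complex.ofReal_mul,
      Complex.ofReal_neg]
    linear_combination (-(ω * w i) : ℂ) * Complex.I_sq
  · rw [dotProduct_add, dotProduct_smul, hdot, hdot, hcu, hcw]
    simp

end Detectability

section Circuit

variable {L1 L2 C1 C2 R : ℝ}

theorem mem_ker_diagonal_zero_zero_zero_iff (hR : R ≠ 0) (x : Fin 4 → ℝ) :
    x ∈ LinearMap.ker (diagonal ![0, 0, 0, 1 / R]).mulVecLin ↔ x 3 = 0 := by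
  rw [LinearMap.mem_ker, mulVecLin_apply, funext_iff]
  simp [Fin.forall_fin_succ, mulVec_diagonal, hR]

theorem mem_span_e1_iff (x : Fin 4 → ℝ) :
    x ∈ Submodule.span ℝ {![1, 0, 0, 0]} ↔ x 1 = 0 ∧ x 2 = 0 ∧ x 3 = 0 := by
  rw [Submodule.mem_span_singleton]
  constructor
  · rintro ⟨a, rfl⟩
    simp
  · rintro ⟨h1, h2, h3⟩
    exact ⟨x 0, by ext i; fin_cases i <;> simp [h1, h2, h3]⟩

theorem mem_span_e1_e3_iff (x : Fin 4 → ℝ) :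
    x ∈ Submodule.span ℝ {![1, 0, 0, 0], ![0, 0, 1, 0]} ↔ x 1 = 0 ∧ x 3 = 0 := by
  rw [Submodule.mem_span_pair]
  constructor
  · rintro ⟨a, b, rfl⟩
    simp
  · rintro ⟨h1, h3⟩
    exact ⟨x 0, x 2, by ext i; fin_cases i <;> simp [h1, h3]⟩

theorem mulVec_AI (x : Fin 4 → ℝ) :
    (diagonal ![L1, L2, C1, C2]⁻¹ *
        !![0, 0, 0, 0; 0, 0, 1, 1; 0, -1, 0, 0; 0, -1, 0, -1 / R]) *ᵥ x =
      ![0, (x 2 + x 3) / L2, -x 1 / C1, -(x 1 + x 3 / R) / C2] := by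
  rw [← mulVec_mulVec]
  ext i; fin_cases i <;> simp [mulVec, dotProduct, Fin.sum_univ_four] <;> ring

theorem mulVec_AII (x : Fin 4 → ℝ) :
    (diagonal ![L1, L2, C1, C2]⁻¹ *
        !![0, 0, -1, 0; 0, 0, 0, 1; 1, 0, 0, 0; 0, -1, 0, -1 / R]) *ᵥ x =
      ![-x 2 / L1, x 3 / L2, x 0 / C1, -(x 1 + x 3 / R) / C2] := by
  rw [← mulVec_mulVec]
  ext i; fin_cases i <;> simp [mulVec, dotProduct, Fin.sum_univ_four] <;> ring

theorem isLargestInvariantIn_span_e1 (hL2 : L2 ≠ 0) (hC2 : C2 ≠ 0) (hR : R ≠ 0)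
    {A : Matrix (Fin 4) (Fin 4) ℝ}
    (hA : ∀ x, A *ᵥ x = ![0, (x 2 + x 3) / L2, -x 1 / C1, -(x 1 + x 3 / R) / C2]) :
    IsLargestInvariantIn A (LinearMap.ker (diagonal ![0, 0, 0, 1 / R]).mulVecLin)
      (Submodule.span ℝ {![1, 0, 0, 0]}) := by
  refine isLargestInvariantIn_of_forall_pow (fun x hx => ?_) (fun x hx => ?_) fun x hx => ?_
  · rw [mem_span_e1_iff] at hx
    exact (mem_ker_diagonal_zero_zero_zero_iff hR x).2 hx.2.2
  · obtain ⟨h1, h2, h3⟩ := (mem_span_e1_iff x).1 hx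
    rw [mem_span_e1_iff, hA]
    simp [h1, h2, h3]
  · have hW k := (mem_ker_diagonal_zero_zero_zero_iff hR _).1 (hx k)
    have h3 : x 3 = 0 := by simpa using hW 0
    have h1 : x 1 = 0 := by simpa [hA, h3, hC2] using hW 1
    have h2 : x 2 = 0 := by simpa [pow_two, ← mulVec_mulVec, hA, h1, h3, hC2, hL2] using hW 2
    exact (mem_span_e1_iff x).2 ⟨h1, h2, h3⟩

theorem isLargestInvariantIn_span_e1_e3 (hC2 : C2 ≠ 0) (hR : R ≠ 0)
    {A : Matrix (Fin 4) (Fin 4) ℝ}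
    (hA : ∀ x, A *ᵥ x = ![-x 2 / L1, x 3 / L2, x 0 / C1, -(x 1 + x 3 / R) / C2]) :
    IsLargestInvariantIn A (LinearMap.ker (diagonal ![0, 0, 0, 1 / R]).mulVecLin)
      (Submodule.span ℝ {![1, 0, 0, 0], ![0, 0, 1, 0]}) := by
  refine isLargestInvariantIn_of_forall_pow (fun x hx => ?_) (fun x hx => ?_) fun x hx => ?_
  · rw [mem_span_e1_e3_iff] at hx
    exact (mem_ker_diagonal_zero_zero_zero_iff hR x).2 hx.2
  · obtain ⟨h1, h3⟩ := (mem_span_e1_e3_iff x).1 hx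
    rw [mem_span_e1_e3_iff, hA]
    simp [h1, h3]
  · have hW k := (mem_ker_diagonal_zero_zero_zero_iff hR _).1 (hx k)
    have h3 : x 3 = 0 := by simpa using hW 0
    have h1 : x 1 = 0 := by simpa [hA, h3, hC2] using hW 1
    exact (mem_span_e1_e3_iff x).2 ⟨h1, h3⟩

theorem hasUndetectableMode_of_mulVec_e1_eq_zero {A : Matrix (Fin 4) (Fin 4) ℝ}
    (hA : A *ᵥ ![1, 0, 0, 0] = 0) (γ : ℝ) : HasUndetectableMode A ![0, 0, 0, γ] :=
  hasUndetectableMode_of_rotation (u := ![1, 0, 0, 0]) (w := 0) 0 (by simp) (by simpa using hA)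
    (by simp) (by simp [dotProduct, Fin.sum_univ_four]) (by simp)

theorem hasUndetectableMode_span_e1_e3 (hL1 : 0 < L1) (hC1 : 0 < C1) {A : Matrix (Fin 4) (Fin 4) ℝ}
    (hA : ∀ x, A *ᵥ x = ![-x 2 / L1, x 3 / L2, x 0 / C1, -(x 1 + x 3 / R) / C2]) (γ : ℝ) :
    HasUndetectableMode A ![0, 0, 0, γ] := by
  set ω := (Real.sqrt (L1 * C1))⁻¹
  have hω : ω ≠ 0 := by positivity
  have hω2 : ω ^ 2 * C1 = 1 / L1 := by
    rw [inv_pow, Real.sq_sqrt (by positivity)]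
    field_simp
  refine hasUndetectableMode_of_rotation (u := ![ω * C1, 0, 0, 0]) (w := ![0, 0, -1, 0]) ω
    (by simp [hω, hC1.ne']) ?_ ?_ (by simp [dotProduct, Fin.sum_univ_four])
    (by simp [dotProduct, Fin.sum_univ_four])
  · rw [hA]; ext i; fin_cases i <;> simp [hC1.ne']
  · rw [hA]; ext i; fin_cases i <;> simp [← hω2]; ring

end Circuit

/-- the largest A_I-invariant subspace inside ker Q is span{e1}; the largest
A_II-invariant subspace inside ker Q is span{e1,e3}; hence neither (A_I, C) nor (A_II, C)
is detectable (PBH: an unobservable eigenvalue with nonnegative real part exists). -/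
theorem largest_invariant_subspaces_and_nondetectability
    (L1 L2 C1 C2 R : ℝ) (hL1 : 0 < L1) (hL2 : 0 < L2) (hC1 : 0 < C1)
    (hC2 : 0 < C2) (hR : 0 < R)
    (P : Matrix (Fin 4) (Fin 4) ℝ) (hP : P = (1/2 : ℝ) • Matrix.diagonal ![L1, L2, C1, C2])
    (AIq AIIq : Matrix (Fin 4) (Fin 4) ℝ)
    (hAIq : AIq = !![0,0,0,0; 0,0,1,1; 0,-1,0,0; 0,-1,0,-1/R])
    (hAIIq : AIIq = !![0,0,-1,0; 0,0,0,1; 1,0,0,0; 0,-1,0,-1/R])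
    (AI AII : Matrix (Fin 4) (Fin 4) ℝ)
    (hAI : AI = (1/2 : ℝ) • (P⁻¹ * AIq)) (hAII : AII = (1/2 : ℝ) • (P⁻¹ * AIIq))
    (Q : Matrix (Fin 4) (Fin 4) ℝ) (hQ : Q = Matrix.diagonal ![0, 0, 0, 1/R])
    (C : Fin 4 → ℝ) (hC : C = ![0, 0, 0, R ^ (-(1:ℝ)/2)])
    (e1 e3 : Fin 4 → ℝ) (he1 : e1 = ![1,0,0,0]) (he3 : e3 = ![0,0,1,0])
    (kerQ : Submodule ℝ (Fin 4 → ℝ)) (hkerQ : kerQ = LinearMap.ker Q.mulVecLin) :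
    -- span{e1} is the largest A_I-invariant subspace of ker Q
    (Submodule.span ℝ {e1} ≤ kerQ ∧
     (∀ x ∈ Submodule.span ℝ {e1}, AI *ᵥ x ∈ Submodule.span ℝ {e1}) ∧
     (∀ S : Submodule ℝ (Fin 4 → ℝ),
        (∀ x ∈ S, AI *ᵥ x ∈ S) → S ≤ kerQ → S ≤ Submodule.span ℝ {e1})) ∧
    -- span{e1,e3} is the largest A_II-invariant subspace of ker Q
    (Submodule.span ℝ {e1, e3} ≤ kerQ ∧
     (∀ x ∈ Submodule.span ℝ {e1, e3}, AII *ᵥ x ∈ Submodule.span ℝ {e1, e3}) ∧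
     (∀ S : Submodule ℝ (Fin 4 → ℝ),
        (∀ x ∈ S, AII *ᵥ x ∈ S) → S ≤ kerQ → S ≤ Submodule.span ℝ {e1, e3})) ∧
    -- neither pair is detectable (PBH test fails)
    (∃ z : ℂ, 0 ≤ z.re ∧ ∃ v : Fin 4 → ℂ, v ≠ 0 ∧
       (AI.map Complex.ofReal) *ᵥ v = z • v ∧ (fun i => (Complex.ofReal (C i))) ⬝ᵥ v = 0) ∧
    (∃ z : ℂ, 0 ≤ z.re ∧ ∃ v : Fin 4 → ℂ, v ≠ 0 ∧
       (AII.map Complex.ofReal) *ᵥ v = z • v ∧ (fun i => (Complex.ofReal (C i))) ⬝ᵥ v = 0) := by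
  subst hP hAIq hAIIq hAI hAII hQ hC he1 he3 hkerQ
  have hd : ∀ i, ![L1, L2, C1, C2] i ≠ 0 := by
    intro i; fin_cases i <;> simp [hL1.ne', hL2.ne', hC1.ne', hC2.ne']
  rw [half_smul_mul_inv_half_smul_diagonal _ hd, half_smul_mul_inv_half_smul_diagonal _ hd]
  exact ⟨isLargestInvariantIn_span_e1 hL2.ne' hC2.ne' hR.ne' mulVec_AI,
    isLargestInvariantIn_span_e1_e3 hC2.ne' hR.ne' mulVec_AII,
    hasUndetectableMode_of_mulVec_e1_eq_zero (by simp [mulVec_AI]) _,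
    hasUndetectableMode_span_e1_e3 hL1 hC1 mulVec_AII _⟩
end

section
/- For x₀ = e1 (first standard basis vector) and ω = 1/√(L1C1): e^{A_I t} x₀ = x₀ for all t, and e^{A_II t} x₀ = cos(ωt)·e1 + √(L1/C1)·sin(ωt)·e3 for all t. -/
/-!
The first column of `A_I^q` vanishes, so `A_I e1 = 0` and every term of the exponential series
except the first kills `e1`. For `A_II`, put `w = √(L1/C1) e3`: then `A_II e1 = ω w` and
`A_II w = -ω e1`, so on the plane spanned by `e1` and `w` the matrix `t A_II` acts as `ωt` times
a quarter turn. Hence the even powers of `t A_II` send `e1` to `(-1)^k (ωt)^(2k) e1` and the odd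
ones to `(-1)^k (ωt)^(2k+1) w`, and the even and odd parts of the exponential series are the
cosine and sine series of `ωt`.
-/

open Matrix NormedSpace
open scoped Nat

namespace Matrix

variable {n : Type*} [Fintype n] [DecidableEq n]

theorem smul_mul_inv_smul_diagonal_mul {K : Type*} [Field K] {c : K} (hc : c ≠ 0) {d : n → K}
    (hd : ∀ i, d i ≠ 0) (Q : Matrix n n K) :
    c • ((c • diagonal d)⁻¹ * Q) = diagonal d⁻¹ * Q := by
  have hinv : (c • diagonal d)⁻¹ = c⁻¹ • diagonal d⁻¹ := by
    refine inv_eq_left_inv ?_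
    rw [smul_mul_smul_comm, diagonal_mul_diagonal, inv_mul_cancel₀ hc, one_smul]
    simp [hd]
  rw [hinv, smul_mul_assoc, smul_smul, mul_inv_cancel₀ hc, one_smul]

theorem pow_mulVec_of_mulVec_eq_smul {R : Type*} [CommSemiring R] {A : Matrix n n R}
    {v : n → R} {c : R} (h : A *ᵥ v = c • v) (k : ℕ) : A ^ k *ᵥ v = c ^ k • v := by
  induction k with
  | zero => simp
  | succ k ih => rw [pow_succ', ← mulVec_mulVec, ih, mulVec_smul, h, smul_smul, pow_succ]

section RCLike

variable {𝕂 : Type*} [RCLike 𝕂]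

theorem hasSum_exp_mulVec (A : Matrix n n 𝕂) (v : n → 𝕂) :
    HasSum (fun k => (k !⁻¹ : 𝕂) • (A ^ k *ᵥ v)) (exp A *ᵥ v) := by
  have hexp : HasSum (fun k => (k !⁻¹ : 𝕂) • A ^ k) (exp A) :=
    open scoped Matrix.Norms.Operator in exp_series_hasSum_exp' A
  simpa only [mulVec.addMonoidHomLeft, AddMonoidHom.coe_mk, ZeroHom.coe_mk, Function.comp_def,
    smul_mulVec] using hexp.map (mulVec.addMonoidHomLeft v)
      (continuous_id.matrix_mulVec continuous_const)

theorem exp_mulVec_of_mulVec_eq_zero {A : Matrix n n 𝕂} {v : n → 𝕂} (h : A *ᵥ v = 0) :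
    exp A *ᵥ v = v := by
  refine (hasSum_exp_mulVec A v).unique ?_
  convert hasSum_single (f := fun k => (k !⁻¹ : 𝕂) • (A ^ k *ᵥ v)) 0 fun k hk => ?_
  · simp
  · obtain ⟨k, rfl⟩ := Nat.exists_eq_succ_of_ne_zero hk
    rw [pow_succ, ← mulVec_mulVec, h, mulVec_zero, smul_zero]

end RCLike

theorem exp_mulVec_of_mulVec_eq_smul_of_mulVec_eq_neg_smul {A : Matrix n n ℝ} {u w : n → ℝ}
    {θ : ℝ} (hu : A *ᵥ u = θ • w) (hw : A *ᵥ w = -θ • u) :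
    exp A *ᵥ u = Real.cos θ • u + Real.sin θ • w := by
  have hsq : A ^ 2 *ᵥ u = -θ ^ 2 • u := by
    rw [sq, ← mulVec_mulVec, hu, mulVec_smul, hw, smul_smul]
    ring_nf
  have heven (k : ℕ) : A ^ (2 * k) *ᵥ u = ((-1) ^ k * θ ^ (2 * k)) • u := by
    rw [pow_mul, pow_mulVec_of_mulVec_eq_smul hsq, neg_pow, pow_mul]
  have hodd (k : ℕ) : A ^ (2 * k + 1) *ᵥ u = ((-1) ^ k * θ ^ (2 * k + 1)) • w := by
    rw [pow_succ', ← mulVec_mulVec, heven, mulVec_smul, hu, smul_smul]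
    ring_nf
  refine (hasSum_exp_mulVec A u).unique (HasSum.even_add_odd ?_ ?_)
  · convert (Real.hasSum_cos θ).smul_const u using 2 with k
    rw [heven, smul_smul, div_eq_inv_mul]
  · convert (Real.hasSum_sin θ).smul_const w using 2 with k
    rw [hodd, smul_smul, div_eq_inv_mul]

end Matrix

theorem exp_mode_matrices_on_e1_general
    (L1 L2 C1 C2 R : ℝ) (hL1 : 0 < L1) (hL2 : 0 < L2) (hC1 : 0 < C1)
    (hC2 : 0 < C2)
    (P : Matrix (Fin 4) (Fin 4) ℝ) (hP : P = (1/2 : ℝ) • Matrix.diagonal ![L1, L2, C1, C2])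
    (AIq AIIq : Matrix (Fin 4) (Fin 4) ℝ)
    (hAIq : AIq = !![0,0,0,0; 0,0,1,1; 0,-1,0,0; 0,-1,0,-1/R])
    (hAIIq : AIIq = !![0,0,-1,0; 0,0,0,1; 1,0,0,0; 0,-1,0,-1/R])
    (AI AII : Matrix (Fin 4) (Fin 4) ℝ)
    (hAI : AI = (1/2 : ℝ) • (P⁻¹ * AIq)) (hAII : AII = (1/2 : ℝ) • (P⁻¹ * AIIq))
    (e1 e3 : Fin 4 → ℝ) (he1 : e1 = ![1,0,0,0]) (he3 : e3 = ![0,0,1,0])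
    (ω : ℝ) (hω : ω = 1 / Real.sqrt (L1 * C1)) :
    (∀ t : ℝ, NormedSpace.exp (t • AI) *ᵥ e1 = e1) ∧
    (∀ t : ℝ, NormedSpace.exp (t • AII) *ᵥ e1 =
      Real.cos (ω * t) • e1 + (Real.sqrt (L1 / C1) * Real.sin (ω * t)) • e3) := by
  have hd : ∀ i, ![L1, L2, C1, C2] i ≠ 0 := by
    intro i
    fin_cases i <;> simp <;> positivity
  rw [hP, smul_mul_inv_smul_diagonal_mul (by norm_num) hd] at hAI hAII
  have hAI_e1 : AI *ᵥ e1 = 0 := by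
    subst hAI hAIq he1; ext i; fin_cases i <;> simp [mulVec, dotProduct, Fin.sum_univ_four]
  have hAII_e1 : AII *ᵥ e1 = C1⁻¹ • e3 := by
    subst hAII hAIIq he1 he3; ext i; fin_cases i <;> simp [mulVec, dotProduct, Fin.sum_univ_four]
  have hAII_e3 : AII *ᵥ e3 = -L1⁻¹ • e1 := by
    subst hAII hAIIq he1 he3; ext i; fin_cases i <;> simp [mulVec, dotProduct, Fin.sum_univ_four]
  have hωC1 : ω * √(L1 / C1) = C1⁻¹ := by
    rw [hω, Real.sqrt_div hL1.le, Real.sqrt_mul hL1.le]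
    field_simp
    rw [Real.sq_sqrt hC1.le]
  have hωL1 : √(L1 / C1) * L1⁻¹ = ω := by
    rw [hω, Real.sqrt_div hL1.le, Real.sqrt_mul hL1.le]
    field_simp
    rw [Real.sq_sqrt hL1.le]
  refine ⟨fun t => exp_mulVec_of_mulVec_eq_zero (by rw [smul_mulVec, hAI_e1, smul_zero]),
    fun t => ?_⟩
  have hu : (t • AII) *ᵥ e1 = (ω * t) • √(L1 / C1) • e3 := by
    rw [smul_mulVec, hAII_e1, ← hωC1, smul_smul, smul_smul]
    ring_nf
  have hw : (t • AII) *ᵥ √(L1 / C1) • e3 = -(ω * t) • e1 := by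
    rw [smul_mulVec, mulVec_smul, hAII_e3, ← hωL1, smul_smul, smul_smul]
    ring_nf
  rw [exp_mulVec_of_mulVec_eq_smul_of_mulVec_eq_neg_smul hu hw, smul_smul, mul_comm (Real.sin _)]

/-- e^{A_I t} e1 = e1 and e^{A_II t} e1 = cos(ωt) e1 + √(L1/C1) sin(ωt) e3,
with ω = 1/√(L1 C1). -/
theorem exp_mode_matrices_on_e1
    (L1 L2 C1 C2 R : ℝ) (hL1 : 0 < L1) (hL2 : 0 < L2) (hC1 : 0 < C1)
    (hC2 : 0 < C2) (hR : 0 < R)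
    (P : Matrix (Fin 4) (Fin 4) ℝ) (hP : P = (1/2 : ℝ) • Matrix.diagonal ![L1, L2, C1, C2])
    (AIq AIIq : Matrix (Fin 4) (Fin 4) ℝ)
    (hAIq : AIq = !![0,0,0,0; 0,0,1,1; 0,-1,0,0; 0,-1,0,-1/R])
    (hAIIq : AIIq = !![0,0,-1,0; 0,0,0,1; 1,0,0,0; 0,-1,0,-1/R])
    (AI AII : Matrix (Fin 4) (Fin 4) ℝ)
    (hAI : AI = (1/2 : ℝ) • (P⁻¹ * AIq)) (hAII : AII = (1/2 : ℝ) • (P⁻¹ * AIIq))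
    (e1 e3 : Fin 4 → ℝ) (he1 : e1 = ![1,0,0,0]) (he3 : e3 = ![0,0,1,0])
    (ω : ℝ) (hω : ω = 1 / Real.sqrt (L1 * C1)) :
    (∀ t : ℝ, NormedSpace.exp (t • AI) *ᵥ e1 = e1) ∧
    (∀ t : ℝ, NormedSpace.exp (t • AII) *ᵥ e1 =
      Real.cos (ω * t) • e1 + (Real.sqrt (L1 / C1) * Real.sin (ω * t)) • e3) :=
  exp_mode_matrices_on_e1_general L1 L2 C1 C2 R hL1 hL2 hC1 hC2 P hP AIq AIIq hAIq hAIIq AI AII hAI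
    hAII e1 e3 he1 he3 ω hω
end

section
/- Let M be a real n×n matrix and P symmetric positive definite with MᵀPM − P ≤ 0. If additionally, for every nonzero x, either xᵀ(MᵀPM − P)x < 0 or (Mx)ᵀ(MᵀPM − P)(Mx) < 0, then the spectral radius of M is strictly less than 1. -/
open Matrix

private lemma dot_symm {n : ℕ} (S : Matrix (Fin n) (Fin n) ℝ) (hS : Sᵀ = S)
    (x y : Fin n → ℝ) : x ⬝ᵥ (S *ᵥ y) = y ⬝ᵥ (S *ᵥ x) := by
  rw [dotProduct_mulVec, ← mulVec_transpose, hS, dotProduct_comm]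

private lemma dot_map {n : ℕ} (S : Matrix (Fin n) (Fin n) ℝ) (x y : Fin n → ℝ) :
    (fun i => ((x i : ℂ))) ⬝ᵥ (S.map Complex.ofReal *ᵥ fun i => ((y i : ℂ)))
      = ((x ⬝ᵥ (S *ᵥ y) : ℝ) : ℂ) := by
  have h1 : (Complex.ofRealHom) (x ⬝ᵥ (S *ᵥ y))
      = (Complex.ofRealHom ∘ x) ⬝ᵥ (Complex.ofRealHom ∘ (S *ᵥ y)) :=
    RingHom.map_dotProduct _ _ _
  have h2 : (Complex.ofRealHom ∘ (S *ᵥ y)) = S.map Complex.ofRealHom *ᵥ (Complex.ofRealHom ∘ y) :=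
    funext fun i => RingHom.map_mulVec _ _ _ i
  rw [h2] at h1
  exact h1.symm

private lemma vec_decomp {n : ℕ} (v : Fin n → ℂ) :
    v = (fun i => (((v i).re : ℂ))) + Complex.I • (fun i => (((v i).im : ℂ))) := by
  funext i
  simp [Complex.ext_iff]

private lemma star_vec_decomp {n : ℕ} (v : Fin n → ℂ) :
    star v = (fun i => (((v i).re : ℂ))) - Complex.I • (fun i => (((v i).im : ℂ))) := by
  funext i
  simp [Complex.ext_iff]

private lemma quad_form_decomp {n : ℕ} (S : Matrix (Fin n) (Fin n) ℝ) (hS : Sᵀ = S)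
    (v : Fin n → ℂ) :
    star v ⬝ᵥ (S.map Complex.ofReal *ᵥ v) =
      (((fun i => (v i).re) ⬝ᵥ (S *ᵥ fun i => (v i).re)
        + (fun i => (v i).im) ⬝ᵥ (S *ᵥ fun i => (v i).im) : ℝ) : ℂ) := by
  obtain ⟨a, b, hv⟩ : ∃ a b : Fin n → ℝ,
      v = (fun i => ((a i : ℂ))) + Complex.I • (fun i => ((b i : ℂ))) :=
    ⟨_, _, vec_decomp v⟩
  subst hv
  have hstar : star ((fun i => ((a i : ℂ))) + Complex.I • (fun i => ((b i : ℂ))))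
      = (fun i => ((a i : ℂ))) - Complex.I • (fun i => ((b i : ℂ))) :=
    funext fun i => by simp [Complex.ext_iff]
  have hre : (fun i => ((((fun i => ((a i : ℂ))) + Complex.I • (fun i => ((b i : ℂ)))) i).re)) = a :=
    funext fun i => by simp
  have him : (fun i => ((((fun i => ((a i : ℂ))) + Complex.I • (fun i => ((b i : ℂ)))) i).im)) = b :=
    funext fun i => by simp
  rw [hstar, hre, him]
  rw [mulVec_add, mulVec_smul, sub_dotProduct, smul_dotProduct, dotProduct_add,
    dotProduct_smul, dotProduct_add, dotProduct_smul]
  rw [dot_map S a a, dot_map S a b, dot_map S b a, dot_map S b b, dot_symm S hS b a]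
  simp only [smul_eq_mul]
  push_cast
  linear_combination (-((b ⬝ᵥ S *ᵥ b : ℝ) : ℂ)) * Complex.I_sq

private lemma map_mulVec_real {n : ℕ} (S : Matrix (Fin n) (Fin n) ℝ) (x : Fin n → ℝ) :
    S.map Complex.ofReal *ᵥ (fun i => ((x i : ℂ))) = fun i => (((S *ᵥ x) i : ℂ)) :=
  funext fun i => (RingHom.map_mulVec Complex.ofRealHom S x i).symm

private lemma mulVec_map_decomp {n : ℕ} (S : Matrix (Fin n) (Fin n) ℝ) (v : Fin n → ℂ) :
    S.map Complex.ofReal *ᵥ v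
      = (fun i => (((S *ᵥ fun j => (v j).re) i : ℂ)))
        + Complex.I • (fun i => (((S *ᵥ fun j => (v j).im) i : ℂ))) := by
  conv_lhs => rw [vec_decomp v]
  rw [mulVec_add, mulVec_smul, map_mulVec_real, map_mulVec_real]

private lemma decomp_eq_zero {n : ℕ} {x y : Fin n → ℝ}
    (h : (fun i => ((x i : ℂ))) + Complex.I • (fun i => ((y i : ℂ))) = 0) :
    x = 0 ∧ y = 0 := by
  constructor <;> funext i <;>
    · have := congrFun h i
      simp [Complex.ext_iff] at this
      simp [this]

/-- if MᵀPM - P ≤ 0 (P symmetric positive definite) and for every nonzero x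
either xᵀ(MᵀPM-P)x < 0 or (Mx)ᵀ(MᵀPM-P)(Mx) < 0, then the spectral radius of M is < 1. -/
theorem spectral_radius_lt_one_of_two_step_decrease
    (n : ℕ) (M P : Matrix (Fin n) (Fin n) ℝ)
    (hPpd : P.PosDef)
    (hsemi : (P - Mᵀ * P * M).PosSemidef)
    (hstep : ∀ x : Fin n → ℝ, x ≠ 0 →
      x ⬝ᵥ ((Mᵀ * P * M - P) *ᵥ x) < 0 ∨
      (M *ᵥ x) ⬝ᵥ ((Mᵀ * P * M - P) *ᵥ (M *ᵥ x)) < 0) :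
    ∀ z ∈ spectrum ℂ (M.map Complex.ofReal), ‖z‖ < 1 := by
  intro z hz
  set A := M.map Complex.ofReal with hA
  -- obtain an eigenvector
  rw [spectrum.mem_iff] at hz
  have hdet : ((algebraMap ℂ (Matrix (Fin n) (Fin n) ℂ)) z - A).det = 0 := by
    by_contra h
    exact hz ((Matrix.isUnit_iff_isUnit_det _).2 (isUnit_iff_ne_zero.2 h))
  obtain ⟨v, hv0, hveq⟩ := (Matrix.exists_mulVec_eq_zero_iff).2 hdet
  have hAv : A *ᵥ v = z • v := by
    have h1 := hveq
    rw [sub_mulVec, Algebra.algebraMap_eq_smul_one, smul_mulVec, one_mulVec,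
      sub_eq_zero] at h1
    exact h1.symm
  -- symmetry facts
  have hPsymm : Pᵀ = P := by
    rw [← conjTranspose_eq_transpose_of_trivial]; exact hPpd.1
  have hSsymm : (Mᵀ * P * M)ᵀ = Mᵀ * P * M := by
    rw [transpose_mul, transpose_mul, transpose_transpose, hPsymm, Matrix.mul_assoc]
  have hQsymm : (P - Mᵀ * P * M)ᵀ = P - Mᵀ * P * M := by
    rw [transpose_sub, hPsymm, hSsymm]
  set a : Fin n → ℝ := fun i => (v i).re with ha
  set b : Fin n → ℝ := fun i => (v i).im with hb
  -- key scalar identities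
  have hP0 := quad_form_decomp P hPsymm v
  have hS0 := quad_form_decomp (Mᵀ * P * M) hSsymm v
  have hQ0 := quad_form_decomp (P - Mᵀ * P * M) hQsymm v
  -- the quadratic form of MᵀPM at v equals |z|² times that of P
  have hmap : (Mᵀ * P * M).map Complex.ofReal = Aᴴ * (P.map Complex.ofReal) * A := by
    have h1 : (Mᵀ * P * M).map ⇑Complex.ofRealHom
        = Mᵀ.map ⇑Complex.ofRealHom * P.map ⇑Complex.ofRealHom * M.map ⇑Complex.ofRealHom := by
      rw [Matrix.map_mul, Matrix.map_mul]
    have h2 : Aᴴ = Mᵀ.map ⇑Complex.ofRealHom := by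
      ext i j
      simp [hA, conjTranspose_apply]
    rw [hA, h2]
    exact h1
  have hSquad : star v ⬝ᵥ ((Mᵀ * P * M).map Complex.ofReal *ᵥ v)
      = (‖z‖ : ℂ) ^ 2 * (star v ⬝ᵥ (P.map Complex.ofReal *ᵥ v)) := by
    calc star v ⬝ᵥ ((Mᵀ * P * M).map Complex.ofReal *ᵥ v)
        = star v ⬝ᵥ (Aᴴ *ᵥ ((P.map Complex.ofReal) *ᵥ (A *ᵥ v))) := by
          rw [hmap, ← mulVec_mulVec, ← mulVec_mulVec]
      _ = star (A *ᵥ v) ⬝ᵥ ((P.map Complex.ofReal) *ᵥ (A *ᵥ v)) := by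
          rw [dotProduct_mulVec, star_mulVec]
      _ = star (z • v) ⬝ᵥ ((P.map Complex.ofReal) *ᵥ (z • v)) := by rw [hAv]
      _ = (star z * z) * (star v ⬝ᵥ ((P.map Complex.ofReal) *ᵥ v)) := by
          rw [star_smul, smul_dotProduct, mulVec_smul, dotProduct_smul, smul_eq_mul,
            smul_eq_mul]
          ring
      _ = (‖z‖ : ℂ) ^ 2 * (star v ⬝ᵥ ((P.map Complex.ofReal) *ᵥ v)) := by
          congr 1
          rw [show star z = (starRingEnd ℂ) z from rfl, mul_comm, Complex.mul_conj,
            Complex.normSq_eq_norm_sq]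
          push_cast
          ring
  -- fold real/imag parts
  set Q : Matrix (Fin n) (Fin n) ℝ := P - Mᵀ * P * M with hQdef
  set a : Fin n → ℝ := fun i => (v i).re with ha
  set b : Fin n → ℝ := fun i => (v i).im with hb
  set p : ℝ := a ⬝ᵥ (P *ᵥ a) + b ⬝ᵥ (P *ᵥ b) with hp
  set q : ℝ := a ⬝ᵥ (Q *ᵥ a) + b ⬝ᵥ (Q *ᵥ b) with hq
  have hmapQ : Q.map Complex.ofReal
      = P.map Complex.ofReal - (Mᵀ * P * M).map Complex.ofReal := by
    ext i j
    simp [hQdef, map_apply, Matrix.sub_apply]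
  -- the key scalar identity
  have key : (q : ℂ) = ((1 - ‖z‖ ^ 2) * p : ℝ) := by
    rw [← hQ0, hmapQ, sub_mulVec, dotProduct_sub, hSquad, hP0]
    push_cast
    ring
  have key' : q = (1 - ‖z‖ ^ 2) * p := by exact_mod_cast key
  -- a or b nonzero
  have hab : a ≠ 0 ∨ b ≠ 0 := by
    by_contra h
    push_neg at h
    apply hv0
    funext i
    have h1 := congrFun h.1 i
    have h2 := congrFun h.2 i
    simp [ha, hb] at h1 h2
    exact Complex.ext (by simpa using h1) (by simpa using h2)
  -- positivity of p
  have hPa : 0 ≤ a ⬝ᵥ (P *ᵥ a) := by simpa using hPpd.posSemidef.dotProduct_mulVec_nonneg a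
  have hPb : 0 ≤ b ⬝ᵥ (P *ᵥ b) := by simpa using hPpd.posSemidef.dotProduct_mulVec_nonneg b
  have hp0 : 0 < p := by
    rcases hab with h | h
    · have := hPpd.dotProduct_mulVec_pos h; simp at this; linarith
    · have := hPpd.dotProduct_mulVec_pos h; simp at this; linarith
  have hQa0 : 0 ≤ a ⬝ᵥ (Q *ᵥ a) := by simpa using hsemi.dotProduct_mulVec_nonneg a
  have hQb0 : 0 ≤ b ⬝ᵥ (Q *ᵥ b) := by simpa using hsemi.dotProduct_mulVec_nonneg b
  have hq0 : 0 ≤ q := by rw [hq]; linarith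
  -- |z| ≤ 1
  by_contra hcon
  push_neg at hcon
  have ht2 : ‖z‖ ^ 2 ≤ 1 := by
    by_contra h
    push_neg at h
    have : q < 0 := by linarith [mul_pos (sub_pos.mpr h) hp0, key']
    linarith
  have habs1 : ‖z‖ = 1 := by
    refine le_antisymm ?_ hcon
    nlinarith [ht2, norm_nonneg z, sq_nonneg (‖z‖ - 1)]
  have hqzero : q = 0 := by rw [key', habs1]; ring
  have hQa : Q *ᵥ a = 0 := by
    have h1 : a ⬝ᵥ (Q *ᵥ a) = 0 := by linarith [hq ▸ hqzero]
    have := (hsemi.dotProduct_mulVec_zero_iff a).1 (by simpa using h1)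
    exact this
  have hQb : Q *ᵥ b = 0 := by
    have h1 : b ⬝ᵥ (Q *ᵥ b) = 0 := by linarith [hq ▸ hqzero]
    exact (hsemi.dotProduct_mulVec_zero_iff b).1 (by simpa using h1)
  -- Q (M a) = 0 and Q (M b) = 0
  have hQcv : Q.map Complex.ofReal *ᵥ v = 0 := by
    rw [mulVec_map_decomp]
    rw [show (Q *ᵥ fun j => (v j).re) = 0 from hQa, show (Q *ᵥ fun j => (v j).im) = 0 from hQb]
    funext i
    simp
  have hQcAv : Q.map Complex.ofReal *ᵥ (A *ᵥ v) = 0 := by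
    rw [hAv, mulVec_smul, hQcv, smul_zero]
  have hreA : (fun j => ((A *ᵥ v) j).re) = M *ᵥ a := by
    funext j
    have h := congrFun (mulVec_map_decomp M v) j
    rw [hA, h]
    simp [ha]
  have himA : (fun j => ((A *ᵥ v) j).im) = M *ᵥ b := by
    funext j
    have h := congrFun (mulVec_map_decomp M v) j
    rw [hA, h]
    simp [hb]
  have hdec := mulVec_map_decomp Q (A *ᵥ v)
  rw [hQcAv, hreA, himA] at hdec
  obtain ⟨hQMa, hQMb⟩ := decomp_eq_zero hdec.symm
  -- contradiction with hstep
  have hneg : Mᵀ * P * M - P = -Q := by rw [hQdef, neg_sub]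
  rcases hab with h | h
  · rcases hstep a h with hc | hc
    · rw [hneg, neg_mulVec, hQa] at hc
      simp at hc
    · rw [hneg, neg_mulVec, hQMa] at hc
      simp at hc
  · rcases hstep b h with hc | hc
    · rw [hneg, neg_mulVec, hQb] at hc
      simp at hc
    · rw [hneg, neg_mulVec, hQMb] at hc
      simp at hc
end
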